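/- arXiv:2209.01459 — 5 statements merged into one kernel-verified Lean document; each statement's English description precedes it below -/
import Mathlib

section
/- Let G be a finite connected simple graph with a bridge e (an edge whose deletion disconnects G), and let G₁ and G₂ be the two connected components of G − e. Then scw(G) = max{scw(G₁), scw(G₂)}. -/
open SimpleGraph

universe u

variable {V : Type u}

/-- A tree-cut decomposition of a finite simple graph `G`: a finite tree `T`
on a node type `B`, together with pairwise disjoint (possibly empty) bags
`bag b ⊆ V` whose union is all of `V`. -/
structure TreeCutDecomp [Finite V] (G : SimpleGraph V) where
  B : Type
  finB : Finite B
  T : SimpleGraph B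
  isTree : T.IsTree
  bag : B → Set V
  disj : Pairwise fun b d => Disjoint (bag b) (bag d)
  covers : ∀ v : V, ∃ b, v ∈ bag b

namespace TreeCutDecomp

variable [Finite V] {G : SimpleGraph V}

/-- The adhesion of a link `l` of `T`: the set of edges of `G` whose endpoints lie in
bags indexed by nodes in different components of `T - l` (equivalently, nodes such that
every walk between them uses `l`). -/
def linkAdh (D : TreeCutDecomp G) (l : Sym2 D.B) : Set (Sym2 V) :=
  {e | e ∈ G.edgeSet ∧ ∃ v w : V, ∃ b d : D.B, e = s(v, w) ∧ v ∈ D.bag b ∧ w ∈ D.bag d ∧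
    ∀ p : D.T.Walk b d, l ∈ p.edges}

/-- The adhesion of a node `n` of `T`: the set of edges of `G` whose endpoints lie in
bags indexed by nodes in different components of `T - n` (equivalently, nodes distinct
from `n` such that every walk between them passes through `n`). -/
def nodeAdh (D : TreeCutDecomp G) (n : D.B) : Set (Sym2 V) :=
  {e | e ∈ G.edgeSet ∧ ∃ v w : V, ∃ b d : D.B, e = s(v, w) ∧ v ∈ D.bag b ∧ w ∈ D.bag d ∧
    b ≠ n ∧ d ≠ n ∧ ∀ p : D.T.Walk b d, n ∈ p.support}

/-- The width of a tree-cut decomposition: the maximum of `|adh(l)|` over links `l` of `T`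
and of `|X_b| + |adh(b)|` over nodes `b` of `T`. -/
noncomputable def width (D : TreeCutDecomp G) : ℕ :=
  sSup ({n | ∃ l ∈ D.T.edgeSet, n = (D.linkAdh l).ncard} ∪
        {n | ∃ b : D.B, n = (D.bag b).ncard + (D.nodeAdh b).ncard})

end TreeCutDecomp

/-- The screewidth of `G`: the minimum width of a tree-cut decomposition of `G`. -/
noncomputable def screewidth [Finite V] (G : SimpleGraph V) : ℕ :=
  sInf {n | ∃ D : TreeCutDecomp G, D.width = n}


section Helpers

variable {V : Type u}

/-- transfer reachability along walks when a single edge `s(u,v)` is deleted but its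
endpoints remain reachable. -/
lemma reach_transfer {G : SimpleGraph V} {u v : V}
    (h : (G.deleteEdges {s(u, v)}).Reachable u v) :
    ∀ {x y : V}, G.Reachable x y → (G.deleteEdges {s(u, v)}).Reachable x y := by
  intro x y hxy
  obtain ⟨p⟩ := hxy
  induction p with
  | nil => exact Reachable.refl _
  | cons ha p ih =>
    rename_i a b c
    refine Reachable.trans ?_ ih
    by_cases he : s(a, b) = s(u, v)
    · rw [Sym2.eq_iff] at he
      rcases he with ⟨rfl, rfl⟩ | ⟨rfl, rfl⟩
      · exact h
      · exact h.symm
    · exact Adj.reachable (by simp [ha, he])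

lemma reach_split_aux {G : SimpleGraph V} {u v : V} {x y : V} (p : G.Walk x y) :
    (G.deleteEdges {s(u, v)}).Reachable x y ∨
      (((G.deleteEdges {s(u, v)}).Reachable x u ∨ (G.deleteEdges {s(u, v)}).Reachable x v) ∧
       ((G.deleteEdges {s(u, v)}).Reachable y u ∨ (G.deleteEdges {s(u, v)}).Reachable y v)) := by
  induction p with
  | nil => exact Or.inl (Reachable.refl _)
  | cons ha p ih =>
    rename_i a b c
    by_cases he : s(a, b) = s(u, v)
    · have hxside : (G.deleteEdges {s(u, v)}).Reachable a u ∨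
          (G.deleteEdges {s(u, v)}).Reachable a v := by
        rw [Sym2.eq_iff] at he
        rcases he with ⟨rfl, rfl⟩ | ⟨rfl, rfl⟩
        · exact Or.inl (Reachable.refl _)
        · exact Or.inr (Reachable.refl _)
      have hbside : (G.deleteEdges {s(u, v)}).Reachable b u ∨
          (G.deleteEdges {s(u, v)}).Reachable b v := by
        rw [Sym2.eq_iff] at he
        rcases he with ⟨rfl, rfl⟩ | ⟨rfl, rfl⟩
        · exact Or.inr (Reachable.refl _)
        · exact Or.inl (Reachable.refl _)
      refine Or.inr ⟨hxside, ?_⟩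
      rcases ih with h1 | h1
      · rcases hbside with h2 | h2
        · exact Or.inl (h1.symm.trans h2)
        · exact Or.inr (h1.symm.trans h2)
      · exact h1.2
    · have hab : (G.deleteEdges {s(u, v)}).Reachable a b := Adj.reachable (by simp [ha, he])
      rcases ih with h1 | h1
      · exact Or.inl (hab.trans h1)
      · refine Or.inr ⟨?_, h1.2⟩
        rcases h1.1 with h2 | h2
        · exact Or.inl (hab.trans h2)
        · exact Or.inr (hab.trans h2)

lemma reach_split {G : SimpleGraph V} {u v : V} {x : V} (h : G.Reachable x u) :
    (G.deleteEdges {s(u, v)}).Reachable x u ∨ (G.deleteEdges {s(u, v)}).Reachable x v := by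
  obtain ⟨p⟩ := h
  rcases reach_split_aux (u := u) (v := v) p with h1 | h1
  · exact Or.inl h1
  · exact h1.1

end Helpers

section Join

variable {B₁ B₂ : Type} (T₁ : SimpleGraph B₁) (T₂ : SimpleGraph B₂) (r₁ : B₁) (r₂ : B₂)

/-- Join two graphs by a single edge between `r₁` and `r₂`. -/
def joinGraph : SimpleGraph (B₁ ⊕ B₂) where
  Adj x y := match x, y with
    | .inl a, .inl b => T₁.Adj a b
    | .inr a, .inr b => T₂.Adj a b
    | .inl a, .inr b => a = r₁ ∧ b = r₂
    | .inr a, .inl b => a = r₂ ∧ b = r₁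
  symm := by
    constructor
    rintro (a | a) (b | b) h
    · exact h.symm
    · exact ⟨h.2, h.1⟩
    · exact ⟨h.2, h.1⟩
    · exact h.symm
  loopless := by
    constructor
    rintro (a | a) h
    · exact T₁.loopless.irrefl a h
    · exact T₂.loopless.irrefl a h

@[simp] lemma joinGraph_adj_inl_inl {a b : B₁} :
    (joinGraph T₁ T₂ r₁ r₂).Adj (Sum.inl a) (Sum.inl b) ↔ T₁.Adj a b := Iff.rfl

@[simp] lemma joinGraph_adj_inr_inr {a b : B₂} :
    (joinGraph T₁ T₂ r₁ r₂).Adj (Sum.inr a) (Sum.inr b) ↔ T₂.Adj a b := Iff.rfl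

@[simp] lemma joinGraph_adj_inl_inr {a : B₁} {b : B₂} :
    (joinGraph T₁ T₂ r₁ r₂).Adj (Sum.inl a) (Sum.inr b) ↔ a = r₁ ∧ b = r₂ := Iff.rfl

@[simp] lemma joinGraph_adj_inr_inl {a : B₂} {b : B₁} :
    (joinGraph T₁ T₂ r₁ r₂).Adj (Sum.inr a) (Sum.inl b) ↔ a = r₂ ∧ b = r₁ := Iff.rfl

/-- `Sum.inl` as a graph homomorphism into the join. -/
def inlHom : T₁ →g joinGraph T₁ T₂ r₁ r₂ where
  toFun := Sum.inl
  map_rel' := fun h => h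

/-- `Sum.inr` as a graph homomorphism into the join. -/
def inrHom : T₂ →g joinGraph T₁ T₂ r₁ r₂ where
  toFun := Sum.inr
  map_rel' := fun h => h

end Join

lemma isBridge_iff' {B : Type*} {G : SimpleGraph B} {u v : B} (hadj : G.Adj u v) :
    G.IsBridge s(u, v) ↔ G.Adj u v ∧ ¬(G.deleteEdges {s(u, v)}).Reachable u v :=
  ⟨fun h => ⟨hadj, SimpleGraph.isBridge_iff.mp h⟩, fun h => SimpleGraph.isBridge_iff.mpr h.2⟩

section JoinTree

variable {B₁ B₂ : Type} {T₁ : SimpleGraph B₁} {T₂ : SimpleGraph B₂} {r₁ : B₁} {r₂ : B₂}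

lemma joinGraph_preconnected (h₁ : T₁.Connected) (h₂ : T₂.Connected) :
    (joinGraph T₁ T₂ r₁ r₂).Preconnected := by
  have bridge : (joinGraph T₁ T₂ r₁ r₂).Reachable (Sum.inl r₁) (Sum.inr r₂) :=
    Adj.reachable ⟨rfl, rfl⟩
  have hl : ∀ a : B₁, (joinGraph T₁ T₂ r₁ r₂).Reachable (Sum.inl a) (Sum.inl r₁) :=
    fun a => (h₁.preconnected a r₁).map (inlHom T₁ T₂ r₁ r₂)
  have hr : ∀ a : B₂, (joinGraph T₁ T₂ r₁ r₂).Reachable (Sum.inr a) (Sum.inr r₂) :=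
    fun a => (h₂.preconnected a r₂).map (inrHom T₁ T₂ r₁ r₂)
  rintro (a | a) (b | b)
  · exact (h₁.preconnected a b).map (inlHom T₁ T₂ r₁ r₂)
  · exact ((hl a).trans bridge).trans (hr b).symm
  · exact ((hr a).trans bridge.symm).trans (hl b).symm
  · exact (h₂.preconnected a b).map (inrHom T₁ T₂ r₁ r₂)

/-- Projection of the join onto the left part. -/
def projL : B₁ ⊕ B₂ → B₁ := Sum.elim id (fun _ => r₁)

/-- Projection of the join onto the right part. -/
def projR : B₁ ⊕ B₂ → B₂ := Sum.elim (fun _ => r₂) id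

/-- Reflection: reachability in the join with deleted edges projects to the left factor. -/
lemma joinGraph_reach_projL (S : Set (Sym2 (B₁ ⊕ B₂))) {x y : B₁ ⊕ B₂}
    (h : ((joinGraph T₁ T₂ r₁ r₂).deleteEdges S).Reachable x y) :
    (T₁.deleteEdges (Sym2.map Sum.inl ⁻¹' S)).Reachable (projL (r₁ := r₁) x)
      (projL (r₁ := r₁) y) := by
  obtain ⟨p⟩ := h
  induction p with
  | nil => exact Reachable.refl _
  | cons ha p ih =>
    refine Reachable.trans ?_ ih
    rename_i a b c
    rw [SimpleGraph.deleteEdges_adj] at ha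
    obtain ⟨ha1, ha2⟩ := ha
    match a, b with
    | Sum.inl a, Sum.inl b =>
      refine Adj.reachable ?_
      rw [SimpleGraph.deleteEdges_adj]
      refine ⟨ha1, fun hs => ha2 ?_⟩
      simpa [Sym2.map_pair_eq, projL] using hs
    | Sum.inl a, Sum.inr b =>
      obtain ⟨rfl, rfl⟩ := ha1
      exact Reachable.refl _
    | Sum.inr a, Sum.inl b =>
      obtain ⟨rfl, rfl⟩ := ha1
      exact Reachable.refl _
    | Sum.inr a, Sum.inr b => exact Reachable.refl _

/-- Reflection: reachability in the join with deleted edges projects to the right factor. -/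
lemma joinGraph_reach_projR (S : Set (Sym2 (B₁ ⊕ B₂))) {x y : B₁ ⊕ B₂}
    (h : ((joinGraph T₁ T₂ r₁ r₂).deleteEdges S).Reachable x y) :
    (T₂.deleteEdges (Sym2.map Sum.inr ⁻¹' S)).Reachable (projR (r₂ := r₂) x)
      (projR (r₂ := r₂) y) := by
  obtain ⟨p⟩ := h
  induction p with
  | nil => exact Reachable.refl _
  | cons ha p ih =>
    refine Reachable.trans ?_ ih
    rename_i a b c
    rw [SimpleGraph.deleteEdges_adj] at ha
    obtain ⟨ha1, ha2⟩ := ha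
    match a, b with
    | Sum.inr a, Sum.inr b =>
      refine Adj.reachable ?_
      rw [SimpleGraph.deleteEdges_adj]
      refine ⟨ha1, fun hs => ha2 ?_⟩
      simpa [Sym2.map_pair_eq, projR] using hs
    | Sum.inl a, Sum.inr b =>
      obtain ⟨rfl, rfl⟩ := ha1
      exact Reachable.refl _
    | Sum.inr a, Sum.inl b =>
      obtain ⟨rfl, rfl⟩ := ha1
      exact Reachable.refl _
    | Sum.inl a, Sum.inl b => exact Reachable.refl _

/-- Deleting the joining edge separates the two sides. -/
lemma joinGraph_side {x y : B₁ ⊕ B₂}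
    (h : ((joinGraph T₁ T₂ r₁ r₂).deleteEdges {s(Sum.inl r₁, Sum.inr r₂)}).Reachable x y) :
    x.isLeft = y.isLeft := by
  obtain ⟨p⟩ := h
  induction p with
  | nil => rfl
  | cons ha p ih =>
    rename_i a b c
    refine Eq.trans ?_ ih
    rw [SimpleGraph.deleteEdges_adj] at ha
    obtain ⟨ha1, ha2⟩ := ha
    match a, b with
    | Sum.inl a, Sum.inl b => rfl
    | Sum.inr a, Sum.inr b => rfl
    | Sum.inl a, Sum.inr b =>
      obtain ⟨rfl, rfl⟩ := ha1
      exact absurd rfl ha2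
    | Sum.inr a, Sum.inl b =>
      obtain ⟨rfl, rfl⟩ := ha1
      exact absurd (Set.mem_singleton_iff.mpr (Sym2.eq_swap)) ha2

lemma joinGraph_isTree (h₁ : T₁.IsTree) (h₂ : T₂.IsTree) :
    (joinGraph T₁ T₂ r₁ r₂).IsTree := by
  constructor
  · have : Nonempty (B₁ ⊕ B₂) := ⟨Sum.inl r₁⟩
    exact Connected.mk (joinGraph_preconnected h₁.isConnected h₂.isConnected)
  · rw [SimpleGraph.isAcyclic_iff_forall_adj_isBridge]
    rintro (a | a) (b | b) hab
    · rw [isBridge_iff' hab]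
      refine ⟨hab, fun hr => ?_⟩
      have := joinGraph_reach_projL (T₂ := T₂) (r₂ := r₂) {s(Sum.inl a, Sum.inl b)} hr
      simp only [projL, Sum.elim_inl, id] at this
      have hb : T₁.IsBridge s(a, b) :=
        (SimpleGraph.isAcyclic_iff_forall_adj_isBridge.mp h₁.IsAcyclic) hab
      rw [isBridge_iff' (G := T₁) hab] at hb
      refine hb.2 ?_
      refine this.mono ?_
      intro x y hxy
      rw [SimpleGraph.deleteEdges_adj] at hxy ⊢
      refine ⟨hxy.1, fun hs => hxy.2 ?_⟩
      simp only [Set.mem_preimage, Set.mem_singleton_iff] at *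
      rw [hs, Sym2.map_pair_eq]
    · obtain ⟨rfl, rfl⟩ := hab
      rw [SimpleGraph.isBridge_iff]
      refine fun hr => ?_
      have := joinGraph_side hr
      simp at this
    · obtain ⟨rfl, rfl⟩ := hab
      rw [SimpleGraph.isBridge_iff]
      refine fun hr => ?_
      have := joinGraph_side (T₁ := T₁) (T₂ := T₂) (r₁ := b) (r₂ := a)
        (x := Sum.inl b) (y := Sum.inr a) ?_
      · simp at this
      · refine hr.symm.mono ?_
        intro x y hxy
        rw [SimpleGraph.deleteEdges_adj] at hxy ⊢
        refine ⟨hxy.1, fun hs => hxy.2 ?_⟩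
        simp only [Set.mem_singleton_iff] at *
        rw [hs, Sym2.eq_swap]
    · rw [isBridge_iff' hab]
      refine ⟨hab, fun hr => ?_⟩
      have := joinGraph_reach_projR (T₁ := T₁) (r₁ := r₁) {s(Sum.inr a, Sum.inr b)} hr
      simp only [projR, Sum.elim_inr, id] at this
      have hb : T₂.IsBridge s(a, b) :=
        (SimpleGraph.isAcyclic_iff_forall_adj_isBridge.mp h₂.IsAcyclic) hab
      rw [isBridge_iff' (G := T₂) hab] at hb
      refine hb.2 ?_
      refine this.mono ?_
      intro x y hxy
      rw [SimpleGraph.deleteEdges_adj] at hxy ⊢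
      refine ⟨hxy.1, fun hs => hxy.2 ?_⟩
      simp only [Set.mem_preimage, Set.mem_singleton_iff] at *
      rw [hs, Sym2.map_pair_eq]

end JoinTree

namespace TreeCutDecomp

variable [Finite V] {G : SimpleGraph V}

/-- The defining set of values whose supremum is the width. -/
def widthSet (D : TreeCutDecomp G) : Set ℕ :=
  {n | ∃ l ∈ D.T.edgeSet, n = (D.linkAdh l).ncard} ∪
    {n | ∃ b : D.B, n = (D.bag b).ncard + (D.nodeAdh b).ncard}

lemma width_eq_sSup (D : TreeCutDecomp G) : D.width = sSup D.widthSet := rfl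

lemma widthSet_finite (D : TreeCutDecomp G) : D.widthSet.Finite := by
  have := D.finB
  apply Set.Finite.union
  · have h : {n | ∃ l ∈ D.T.edgeSet, n = (D.linkAdh l).ncard} ⊆
        (fun l => (D.linkAdh l).ncard) '' Set.univ := by
      rintro n ⟨l, _, rfl⟩
      exact ⟨l, trivial, rfl⟩
    exact (Set.finite_univ.image _).subset h
  · have h : {n | ∃ b : D.B, n = (D.bag b).ncard + (D.nodeAdh b).ncard} ⊆
        (fun b => (D.bag b).ncard + (D.nodeAdh b).ncard) '' Set.univ := by
      rintro n ⟨b, rfl⟩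
      exact ⟨b, trivial, rfl⟩
    exact (Set.finite_univ.image _).subset h

lemma widthSet_nonempty (D : TreeCutDecomp G) : D.widthSet.Nonempty := by
  have : Nonempty D.B := D.isTree.isConnected.nonempty
  obtain ⟨b⟩ := this
  exact ⟨_, Or.inr ⟨b, rfl⟩⟩

lemma le_width (D : TreeCutDecomp G) {n : ℕ} (h : n ∈ D.widthSet) : n ≤ D.width :=
  le_csSup D.widthSet_finite.bddAbove h

lemma width_le (D : TreeCutDecomp G) {m : ℕ} (h : ∀ n ∈ D.widthSet, n ≤ m) : D.width ≤ m :=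
  csSup_le D.widthSet_nonempty h

end TreeCutDecomp

section Trivial

variable [Finite V]

/-- The trivial tree-cut decomposition with a single bag. -/
def trivialDecomp (G : SimpleGraph V) : TreeCutDecomp G where
  B := Unit
  finB := inferInstance
  T := ⊥
  isTree := by
    constructor
    · refine Connected.mk ?_
      intro x y
      have : x = y := Subsingleton.elim x y
      subst this
      exact Reachable.refl _
    · intro v c hc
      cases c with
      | nil => exact hc.ne_nil rfl
      | cons h p => exact h.elim
  bag := fun _ => Set.univ
  disj := fun a b h => absurd (Subsingleton.elim a b) h
  covers := fun v => ⟨(), trivial⟩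

lemma screewidth_set_nonempty (G : SimpleGraph V) :
    {n | ∃ D : TreeCutDecomp G, D.width = n}.Nonempty :=
  ⟨_, trivialDecomp G, rfl⟩

end Trivial

section Restrict

variable [Finite V] {G : SimpleGraph V}

/-- Restriction of a tree-cut decomposition to an induced subgraph. -/
def TreeCutDecomp.restrict (D : TreeCutDecomp G) (S : Set V) : TreeCutDecomp (G.induce S) where
  B := D.B
  finB := D.finB
  T := D.T
  isTree := D.isTree
  bag := fun b => Subtype.val ⁻¹' D.bag b
  disj := fun b d h => (D.disj h).preimage _
  covers := fun x => D.covers x.val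

lemma TreeCutDecomp.restrict_width_le (D : TreeCutDecomp G) (S : Set V) :
    (D.restrict S).width ≤ D.width := by
  apply TreeCutDecomp.width_le
  rintro n (⟨l, hl, rfl⟩ | ⟨b, rfl⟩)
  · refine le_trans ?_ (D.le_width (Or.inl ⟨l, hl, rfl⟩))
    have hinj : Function.Injective (Sym2.map (Subtype.val : S → V)) :=
      Sym2.map.injective Subtype.val_injective
    rw [← Set.ncard_image_of_injective _ hinj]
    apply Set.ncard_le_ncard _ (Set.toFinite _)
    rintro f ⟨f', ⟨hE, x, y, b, d, rfl, hx, hy, hall⟩, rfl⟩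
    refine ⟨?_, x.val, y.val, b, d, by rw [Sym2.map_pair_eq], hx, hy, hall⟩
    rw [Sym2.map_pair_eq, SimpleGraph.mem_edgeSet]
    exact (SimpleGraph.mem_edgeSet _).mp hE
  · refine le_trans ?_ (D.le_width (Or.inr ⟨b, rfl⟩))
    have h1 : ((D.restrict S).bag b).ncard ≤ (D.bag b).ncard := by
      rw [← Set.ncard_image_of_injective _ (Subtype.val_injective : Function.Injective
        (Subtype.val : S → V))]
      exact Set.ncard_le_ncard (Set.image_preimage_subset _ _) (Set.toFinite _)
    have h2 : ((D.restrict S).nodeAdh b).ncard ≤ (D.nodeAdh b).ncard := by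
      have hinj : Function.Injective (Sym2.map (Subtype.val : S → V)) :=
        Sym2.map.injective Subtype.val_injective
      rw [← Set.ncard_image_of_injective _ hinj]
      apply Set.ncard_le_ncard _ (Set.toFinite _)
      rintro f ⟨f', ⟨hE, x, y, b', d', rfl, hx, hy, hb', hd', hall⟩, rfl⟩
      refine ⟨?_, x.val, y.val, b', d', by rw [Sym2.map_pair_eq], hx, hy, hb', hd', hall⟩
      rw [Sym2.map_pair_eq, SimpleGraph.mem_edgeSet]
      exact (SimpleGraph.mem_edgeSet _).mp hE
    omega

lemma screewidth_induce_le (G : SimpleGraph V) (S : Set V) :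
    screewidth (G.induce S) ≤ screewidth G := by
  obtain ⟨D, hD⟩ := Nat.sInf_mem (screewidth_set_nonempty G)
  calc screewidth (G.induce S) ≤ (D.restrict S).width := Nat.sInf_le ⟨D.restrict S, rfl⟩
    _ ≤ D.width := D.restrict_width_le S
    _ = screewidth G := hD

end Restrict

section Combine

variable [Finite V] {G : SimpleGraph V} {V₁ V₂ : Set V} {u v : V}

/-- Combine tree-cut decompositions of the two sides of a bridge into one of `G`. -/
@[reducible] def combine (D₁ : TreeCutDecomp (G.induce V₁)) (D₂ : TreeCutDecomp (G.induce V₂))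
    (b₁ : D₁.B) (b₂ : D₂.B)
    (hdisj : Disjoint V₁ V₂) (hcover : ∀ x : V, x ∈ V₁ ∨ x ∈ V₂) : TreeCutDecomp G where
  B := D₁.B ⊕ D₂.B
  finB := by have := D₁.finB; have := D₂.finB; infer_instance
  T := joinGraph D₁.T D₂.T b₁ b₂
  isTree := joinGraph_isTree D₁.isTree D₂.isTree
  bag := Sum.elim (fun b => Subtype.val '' D₁.bag b) (fun b => Subtype.val '' D₂.bag b)
  disj := by
    have h12 : ∀ (a : D₁.B) (b : D₂.B),
        Disjoint (Subtype.val '' D₁.bag a) (Subtype.val '' D₂.bag b) := by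
      intro a b
      refine hdisj.mono ?_ ?_
      · rintro x ⟨x', _, rfl⟩; exact x'.2
      · rintro x ⟨x', _, rfl⟩; exact x'.2
    rintro (a | a) (b | b) h
    · exact (D₁.disj (fun he => h (congrArg _ he))).image (Subtype.val_injective.injOn)
        (Set.subset_univ _) (Set.subset_univ _)
    · exact h12 a b
    · exact (h12 b a).symm
    · exact (D₂.disj (fun he => h (congrArg _ he))).image (Subtype.val_injective.injOn)
        (Set.subset_univ _) (Set.subset_univ _)
  covers := by
    intro x
    rcases hcover x with h | h
    · obtain ⟨b, hb⟩ := D₁.covers ⟨x, h⟩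
      exact ⟨Sum.inl b, ⟨x, h⟩, hb, rfl⟩
    · obtain ⟨b, hb⟩ := D₂.covers ⟨x, h⟩
      exact ⟨Sum.inr b, ⟨x, h⟩, hb, rfl⟩

end Combine

section Keys

@[simp] lemma inlHom_apply {B₁ B₂ : Type} {T₁ : SimpleGraph B₁} {T₂ : SimpleGraph B₂}
    {r₁ : B₁} {r₂ : B₂} (x : B₁) : inlHom T₁ T₂ r₁ r₂ x = Sum.inl x := rfl

@[simp] lemma inrHom_apply {B₁ B₂ : Type} {T₁ : SimpleGraph B₁} {T₂ : SimpleGraph B₂}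
    {r₁ : B₁} {r₂ : B₂} (x : B₂) : inrHom T₁ T₂ r₁ r₂ x = Sum.inr x := rfl

variable [Finite V] {G : SimpleGraph V} {V₁ V₂ : Set V} {u v : V}
  {D₁ : TreeCutDecomp (G.induce V₁)} {D₂ : TreeCutDecomp (G.induce V₂)}
  {b₁ : D₁.B} {b₂ : D₂.B} {hdisj : Disjoint V₁ V₂} {hcover : ∀ x : V, x ∈ V₁ ∨ x ∈ V₂}
  {hu : u ∈ V₁} {hv : v ∈ V₂}

lemma combine_linkAdh_inl_subset
    (hb₁ : ⟨u, hu⟩ ∈ D₁.bag b₁) (hb₂ : ⟨v, hv⟩ ∈ D₂.bag b₂)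
    (hcross : ∀ x y : V, G.Adj x y → x ∈ V₁ → y ∈ V₂ → x = u ∧ y = v)
    (a b : D₁.B) :
    (combine D₁ D₂ b₁ b₂ hdisj hcover).linkAdh s(Sum.inl a, Sum.inl b) ⊆
      Sym2.map (Subtype.val : V₁ → V) '' D₁.linkAdh s(a, b) := by
  rintro f ⟨hfE, x, y, b', d', hfeq, hx, hy, hall⟩
  subst hfeq
  have hadj : G.Adj x y := hfE
  rcases b' with c | c <;> rcases d' with c' | c'
  · obtain ⟨x', hx', rfl⟩ := hx
    obtain ⟨y', hy', rfl⟩ := hy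
    refine ⟨s(x', y'), ⟨hadj, x', y', c, c', rfl, hx', hy', ?_⟩, by rw [Sym2.map_pair_eq]⟩
    intro q
    have h2 := hall (q.map (inlHom D₁.T D₂.T b₁ b₂))
    erw [SimpleGraph.Walk.edges_map] at h2
    obtain ⟨l', hl', hmap⟩ := List.mem_map.mp h2
    have hl'eq : l' = s(a, b) := by
      apply Sym2.map.injective Sum.inl_injective
      simpa [Sym2.map_pair_eq] using (show Sym2.map Sum.inl l' = _ from hmap)
    rwa [← hl'eq]
  · exfalso
    obtain ⟨x', hx', rfl⟩ := hx
    obtain ⟨y', hy', rfl⟩ := hy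
    obtain ⟨hxu, hyv⟩ := hcross _ _ hadj x'.2 y'.2
    have hx'' : x' = ⟨u, hu⟩ := Subtype.ext hxu
    have hy'' : y' = ⟨v, hv⟩ := Subtype.ext hyv
    subst hx''; subst hy''
    have hc : c = b₁ := by
      by_contra hne
      exact Set.disjoint_left.mp (D₁.disj hne) hx' hb₁
    have hc' : c' = b₂ := by
      by_contra hne
      exact Set.disjoint_left.mp (D₂.disj hne) hy' hb₂
    have h2 := hall (SimpleGraph.Walk.cons
      (show (joinGraph D₁.T D₂.T b₁ b₂).Adj (Sum.inl c) (Sum.inr c') from ⟨hc, hc'⟩)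
      SimpleGraph.Walk.nil)
    simp [Sym2.eq_iff] at h2
  · exfalso
    obtain ⟨x', hx', rfl⟩ := hx
    obtain ⟨y', hy', rfl⟩ := hy
    obtain ⟨hyu, hxv⟩ := hcross _ _ hadj.symm y'.2 x'.2
    have hx'' : x' = ⟨v, hv⟩ := Subtype.ext hxv
    have hy'' : y' = ⟨u, hu⟩ := Subtype.ext hyu
    subst hx''; subst hy''
    have hc : c = b₂ := by
      by_contra hne
      exact Set.disjoint_left.mp (D₂.disj hne) hx' hb₂
    have hc' : c' = b₁ := by
      by_contra hne
      exact Set.disjoint_left.mp (D₁.disj hne) hy' hb₁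
    have h2 := hall (SimpleGraph.Walk.cons
      (show (joinGraph D₁.T D₂.T b₁ b₂).Adj (Sum.inr c) (Sum.inl c') from ⟨hc, hc'⟩)
      SimpleGraph.Walk.nil)
    simp [Sym2.eq_iff] at h2
  · exfalso
    obtain ⟨q⟩ := D₂.isTree.isConnected.preconnected c c'
    have h2 := hall (q.map (inrHom D₁.T D₂.T b₁ b₂))
    erw [SimpleGraph.Walk.edges_map] at h2
    obtain ⟨l', hl', hmap⟩ := List.mem_map.mp h2
    induction l' using Sym2.ind with
    | _ p q' =>
      rw [Sym2.map_pair_eq] at hmap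
      rw [Sym2.eq_iff] at hmap
      rcases hmap with ⟨h, -⟩ | ⟨h, -⟩ <;> simp at h

lemma combine_linkAdh_inr_subset
    (hb₁ : ⟨u, hu⟩ ∈ D₁.bag b₁) (hb₂ : ⟨v, hv⟩ ∈ D₂.bag b₂)
    (hcross : ∀ x y : V, G.Adj x y → x ∈ V₁ → y ∈ V₂ → x = u ∧ y = v)
    (a b : D₂.B) :
    (combine D₁ D₂ b₁ b₂ hdisj hcover).linkAdh s(Sum.inr a, Sum.inr b) ⊆
      Sym2.map (Subtype.val : V₂ → V) '' D₂.linkAdh s(a, b) := by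
  rintro f ⟨hfE, x, y, b', d', hfeq, hx, hy, hall⟩
  subst hfeq
  have hadj : G.Adj x y := hfE
  rcases b' with c | c <;> rcases d' with c' | c'
  · exfalso
    obtain ⟨q⟩ := D₁.isTree.isConnected.preconnected c c'
    have h2 := hall (q.map (inlHom D₁.T D₂.T b₁ b₂))
    erw [SimpleGraph.Walk.edges_map] at h2
    obtain ⟨l', hl', hmap⟩ := List.mem_map.mp h2
    induction l' using Sym2.ind with
    | _ p q' =>
      rw [Sym2.map_pair_eq] at hmap
      rw [Sym2.eq_iff] at hmap
      rcases hmap with ⟨h, -⟩ | ⟨h, -⟩ <;> simp at h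
  · exfalso
    obtain ⟨x', hx', rfl⟩ := hx
    obtain ⟨y', hy', rfl⟩ := hy
    obtain ⟨hxu, hyv⟩ := hcross _ _ hadj x'.2 y'.2
    have hx'' : x' = ⟨u, hu⟩ := Subtype.ext hxu
    have hy'' : y' = ⟨v, hv⟩ := Subtype.ext hyv
    subst hx''; subst hy''
    have hc : c = b₁ := by
      by_contra hne
      exact Set.disjoint_left.mp (D₁.disj hne) hx' hb₁
    have hc' : c' = b₂ := by
      by_contra hne
      exact Set.disjoint_left.mp (D₂.disj hne) hy' hb₂
    have h2 := hall (SimpleGraph.Walk.cons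
      (show (joinGraph D₁.T D₂.T b₁ b₂).Adj (Sum.inl c) (Sum.inr c') from ⟨hc, hc'⟩)
      SimpleGraph.Walk.nil)
    simp [Sym2.eq_iff] at h2
  · exfalso
    obtain ⟨x', hx', rfl⟩ := hx
    obtain ⟨y', hy', rfl⟩ := hy
    obtain ⟨hyu, hxv⟩ := hcross _ _ hadj.symm y'.2 x'.2
    have hx'' : x' = ⟨v, hv⟩ := Subtype.ext hxv
    have hy'' : y' = ⟨u, hu⟩ := Subtype.ext hyu
    subst hx''; subst hy''
    have hc : c = b₂ := by
      by_contra hne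
      exact Set.disjoint_left.mp (D₂.disj hne) hx' hb₂
    have hc' : c' = b₁ := by
      by_contra hne
      exact Set.disjoint_left.mp (D₁.disj hne) hy' hb₁
    have h2 := hall (SimpleGraph.Walk.cons
      (show (joinGraph D₁.T D₂.T b₁ b₂).Adj (Sum.inr c) (Sum.inl c') from ⟨hc, hc'⟩)
      SimpleGraph.Walk.nil)
    simp [Sym2.eq_iff] at h2
  · obtain ⟨x', hx', rfl⟩ := hx
    obtain ⟨y', hy', rfl⟩ := hy
    refine ⟨s(x', y'), ⟨hadj, x', y', c, c', rfl, hx', hy', ?_⟩, by rw [Sym2.map_pair_eq]⟩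
    intro q
    have h2 := hall (q.map (inrHom D₁.T D₂.T b₁ b₂))
    erw [SimpleGraph.Walk.edges_map] at h2
    obtain ⟨l', hl', hmap⟩ := List.mem_map.mp h2
    have hl'eq : l' = s(a, b) := by
      apply Sym2.map.injective Sum.inr_injective
      simpa [Sym2.map_pair_eq] using (show Sym2.map Sum.inr l' = _ from hmap)
    rwa [← hl'eq]

lemma combine_linkAdh_bridge_subset
    (hcross : ∀ x y : V, G.Adj x y → x ∈ V₁ → y ∈ V₂ → x = u ∧ y = v) :
    (combine D₁ D₂ b₁ b₂ hdisj hcover).linkAdh s(Sum.inl b₁, Sum.inr b₂) ⊆ {s(u, v)} := by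
  rintro f ⟨hfE, x, y, b', d', hfeq, hx, hy, hall⟩
  subst hfeq
  have hadj : G.Adj x y := hfE
  rcases b' with c | c <;> rcases d' with c' | c'
  · exfalso
    obtain ⟨q⟩ := D₁.isTree.isConnected.preconnected c c'
    have h2 := hall (q.map (inlHom D₁.T D₂.T b₁ b₂))
    erw [SimpleGraph.Walk.edges_map] at h2
    obtain ⟨l', hl', hmap⟩ := List.mem_map.mp h2
    induction l' using Sym2.ind with
    | _ p q' =>
      rw [Sym2.map_pair_eq] at hmap
      rw [Sym2.eq_iff] at hmap
      rcases hmap with ⟨-, h⟩ | ⟨h, -⟩ <;> simp at h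
  · obtain ⟨x', hx', rfl⟩ := hx
    obtain ⟨y', hy', rfl⟩ := hy
    obtain ⟨hxu, hyv⟩ := hcross _ _ hadj x'.2 y'.2
    rw [hxu, hyv]
    rfl
  · obtain ⟨x', hx', rfl⟩ := hx
    obtain ⟨y', hy', rfl⟩ := hy
    obtain ⟨hyu, hxv⟩ := hcross _ _ hadj.symm y'.2 x'.2
    rw [hyu, hxv, Sym2.eq_swap]
    rfl
  · exfalso
    obtain ⟨q⟩ := D₂.isTree.isConnected.preconnected c c'
    have h2 := hall (q.map (inrHom D₁.T D₂.T b₁ b₂))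
    erw [SimpleGraph.Walk.edges_map] at h2
    obtain ⟨l', hl', hmap⟩ := List.mem_map.mp h2
    induction l' using Sym2.ind with
    | _ p q' =>
      rw [Sym2.map_pair_eq] at hmap
      rw [Sym2.eq_iff] at hmap
      rcases hmap with ⟨h, -⟩ | ⟨-, h⟩ <;> simp at h

lemma combine_nodeAdh_inl_subset
    (hb₁ : ⟨u, hu⟩ ∈ D₁.bag b₁) (hb₂ : ⟨v, hv⟩ ∈ D₂.bag b₂)
    (hcross : ∀ x y : V, G.Adj x y → x ∈ V₁ → y ∈ V₂ → x = u ∧ y = v)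
    (m : D₁.B) :
    (combine D₁ D₂ b₁ b₂ hdisj hcover).nodeAdh (Sum.inl m) ⊆
      Sym2.map (Subtype.val : V₁ → V) '' D₁.nodeAdh m := by
  rintro f ⟨hfE, x, y, b', d', hfeq, hx, hy, hbne, hdne, hall⟩
  subst hfeq
  have hadj : G.Adj x y := hfE
  rcases b' with c | c <;> rcases d' with c' | c'
  · obtain ⟨x', hx', rfl⟩ := hx
    obtain ⟨y', hy', rfl⟩ := hy
    refine ⟨s(x', y'), ⟨hadj, x', y', c, c', rfl, hx', hy',
      fun h => hbne (congrArg Sum.inl h), fun h => hdne (congrArg Sum.inl h), ?_⟩,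
      by rw [Sym2.map_pair_eq]⟩
    intro q
    have h2 := hall (q.map (inlHom D₁.T D₂.T b₁ b₂))
    erw [SimpleGraph.Walk.support_map] at h2
    obtain ⟨z, hz, hmap⟩ := List.mem_map.mp h2
    have hz' : z = m := Sum.inl_injective hmap
    rwa [← hz']
  · exfalso
    obtain ⟨x', hx', rfl⟩ := hx
    obtain ⟨y', hy', rfl⟩ := hy
    obtain ⟨hxu, hyv⟩ := hcross _ _ hadj x'.2 y'.2
    have hx'' : x' = ⟨u, hu⟩ := Subtype.ext hxu
    have hy'' : y' = ⟨v, hv⟩ := Subtype.ext hyv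
    subst hx''; subst hy''
    have hc : c = b₁ := by
      by_contra hne
      exact Set.disjoint_left.mp (D₁.disj hne) hx' hb₁
    have hc' : c' = b₂ := by
      by_contra hne
      exact Set.disjoint_left.mp (D₂.disj hne) hy' hb₂
    have h2 := hall (SimpleGraph.Walk.cons
      (show (joinGraph D₁.T D₂.T b₁ b₂).Adj (Sum.inl c) (Sum.inr c') from ⟨hc, hc'⟩)
      SimpleGraph.Walk.nil)
    simp only [SimpleGraph.Walk.support_cons, SimpleGraph.Walk.support_nil,
      List.mem_cons, List.mem_singleton] at h2
    rcases h2 with h | h | h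
    · exact hbne h.symm
    · simp at h
    · exact (List.not_mem_nil h).elim
  · exfalso
    obtain ⟨x', hx', rfl⟩ := hx
    obtain ⟨y', hy', rfl⟩ := hy
    obtain ⟨hyu, hxv⟩ := hcross _ _ hadj.symm y'.2 x'.2
    have hx'' : x' = ⟨v, hv⟩ := Subtype.ext hxv
    have hy'' : y' = ⟨u, hu⟩ := Subtype.ext hyu
    subst hx''; subst hy''
    have hc : c = b₂ := by
      by_contra hne
      exact Set.disjoint_left.mp (D₂.disj hne) hx' hb₂
    have hc' : c' = b₁ := by
      by_contra hne
      exact Set.disjoint_left.mp (D₁.disj hne) hy' hb₁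
    have h2 := hall (SimpleGraph.Walk.cons
      (show (joinGraph D₁.T D₂.T b₁ b₂).Adj (Sum.inr c) (Sum.inl c') from ⟨hc, hc'⟩)
      SimpleGraph.Walk.nil)
    simp only [SimpleGraph.Walk.support_cons, SimpleGraph.Walk.support_nil,
      List.mem_cons, List.mem_singleton] at h2
    rcases h2 with h | h | h
    · simp at h
    · exact hdne h.symm
    · exact (List.not_mem_nil h).elim
  · exfalso
    obtain ⟨q⟩ := D₂.isTree.isConnected.preconnected c c'
    have h2 := hall (q.map (inrHom D₁.T D₂.T b₁ b₂))
    erw [SimpleGraph.Walk.support_map] at h2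
    obtain ⟨z, hz, hmap⟩ := List.mem_map.mp h2
    simp at hmap

lemma combine_nodeAdh_inr_subset
    (hb₁ : ⟨u, hu⟩ ∈ D₁.bag b₁) (hb₂ : ⟨v, hv⟩ ∈ D₂.bag b₂)
    (hcross : ∀ x y : V, G.Adj x y → x ∈ V₁ → y ∈ V₂ → x = u ∧ y = v)
    (m : D₂.B) :
    (combine D₁ D₂ b₁ b₂ hdisj hcover).nodeAdh (Sum.inr m) ⊆
      Sym2.map (Subtype.val : V₂ → V) '' D₂.nodeAdh m := by
  rintro f ⟨hfE, x, y, b', d', hfeq, hx, hy, hbne, hdne, hall⟩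
  subst hfeq
  have hadj : G.Adj x y := hfE
  rcases b' with c | c <;> rcases d' with c' | c'
  · exfalso
    obtain ⟨q⟩ := D₁.isTree.isConnected.preconnected c c'
    have h2 := hall (q.map (inlHom D₁.T D₂.T b₁ b₂))
    erw [SimpleGraph.Walk.support_map] at h2
    obtain ⟨z, hz, hmap⟩ := List.mem_map.mp h2
    simp at hmap
  · exfalso
    obtain ⟨x', hx', rfl⟩ := hx
    obtain ⟨y', hy', rfl⟩ := hy
    obtain ⟨hxu, hyv⟩ := hcross _ _ hadj x'.2 y'.2
    have hx'' : x' = ⟨u, hu⟩ := Subtype.ext hxu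
    have hy'' : y' = ⟨v, hv⟩ := Subtype.ext hyv
    subst hx''; subst hy''
    have hc : c = b₁ := by
      by_contra hne
      exact Set.disjoint_left.mp (D₁.disj hne) hx' hb₁
    have hc' : c' = b₂ := by
      by_contra hne
      exact Set.disjoint_left.mp (D₂.disj hne) hy' hb₂
    have h2 := hall (SimpleGraph.Walk.cons
      (show (joinGraph D₁.T D₂.T b₁ b₂).Adj (Sum.inl c) (Sum.inr c') from ⟨hc, hc'⟩)
      SimpleGraph.Walk.nil)
    simp only [SimpleGraph.Walk.support_cons, SimpleGraph.Walk.support_nil,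
      List.mem_cons, List.mem_singleton] at h2
    rcases h2 with h | h | h
    · simp at h
    · exact hdne h.symm
    · exact (List.not_mem_nil h).elim
  · exfalso
    obtain ⟨x', hx', rfl⟩ := hx
    obtain ⟨y', hy', rfl⟩ := hy
    obtain ⟨hyu, hxv⟩ := hcross _ _ hadj.symm y'.2 x'.2
    have hx'' : x' = ⟨v, hv⟩ := Subtype.ext hxv
    have hy'' : y' = ⟨u, hu⟩ := Subtype.ext hyu
    subst hx''; subst hy''
    have hc : c = b₂ := by
      by_contra hne
      exact Set.disjoint_left.mp (D₂.disj hne) hx' hb₂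
    have hc' : c' = b₁ := by
      by_contra hne
      exact Set.disjoint_left.mp (D₁.disj hne) hy' hb₁
    have h2 := hall (SimpleGraph.Walk.cons
      (show (joinGraph D₁.T D₂.T b₁ b₂).Adj (Sum.inr c) (Sum.inl c') from ⟨hc, hc'⟩)
      SimpleGraph.Walk.nil)
    simp only [SimpleGraph.Walk.support_cons, SimpleGraph.Walk.support_nil,
      List.mem_cons, List.mem_singleton] at h2
    rcases h2 with h | h | h
    · exact hbne h.symm
    · simp at h
    · exact (List.not_mem_nil h).elim
  · obtain ⟨x', hx', rfl⟩ := hx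
    obtain ⟨y', hy', rfl⟩ := hy
    refine ⟨s(x', y'), ⟨hadj, x', y', c, c', rfl, hx', hy',
      fun h => hbne (congrArg Sum.inr h), fun h => hdne (congrArg Sum.inr h), ?_⟩,
      by rw [Sym2.map_pair_eq]⟩
    intro q
    have h2 := hall (q.map (inrHom D₁.T D₂.T b₁ b₂))
    erw [SimpleGraph.Walk.support_map] at h2
    obtain ⟨z, hz, hmap⟩ := List.mem_map.mp h2
    have hz' : z = m := Sum.inr_injective hmap
    rwa [← hz']

lemma combine_width_le
    (hb₁ : ⟨u, hu⟩ ∈ D₁.bag b₁) (hb₂ : ⟨v, hv⟩ ∈ D₂.bag b₂)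
    (hcross : ∀ x y : V, G.Adj x y → x ∈ V₁ → y ∈ V₂ → x = u ∧ y = v) :
    (combine D₁ D₂ b₁ b₂ hdisj hcover).width ≤ max D₁.width D₂.width := by
  have hinj1 : Function.Injective (Sym2.map (Subtype.val : V₁ → V)) :=
    Sym2.map.injective Subtype.val_injective
  have hinj2 : Function.Injective (Sym2.map (Subtype.val : V₂ → V)) :=
    Sym2.map.injective Subtype.val_injective
  have h1w : 1 ≤ D₁.width := by
    have hpos : 0 < (D₁.bag b₁).ncard := (Set.ncard_pos (Set.toFinite _)).mpr ⟨_, hb₁⟩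
    have := D₁.le_width (Or.inr ⟨b₁, rfl⟩)
    omega
  apply TreeCutDecomp.width_le
  rintro n (⟨l, hl, rfl⟩ | ⟨b, rfl⟩)
  · induction l using Sym2.ind with
    | _ x y =>
      have hadj : (joinGraph D₁.T D₂.T b₁ b₂).Adj x y := hl
      have hbr : ((combine D₁ D₂ b₁ b₂ hdisj hcover).linkAdh
          s(Sum.inl b₁, Sum.inr b₂)).ncard ≤ max D₁.width D₂.width := by
        refine le_trans ?_ (le_trans h1w (le_max_left _ _))
        have h := Set.ncard_le_ncard (combine_linkAdh_bridge_subset (D₁ := D₁) (D₂ := D₂) (b₁ := b₁) (b₂ := b₂)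
          (hdisj := hdisj) (hcover := hcover) hcross) (Set.toFinite _)
        simpa using h
      rcases x with a | a <;> rcases y with b | b
      · refine le_trans ?_ (le_max_left _ _)
        refine le_trans ?_ (D₁.le_width (Or.inl ⟨s(a, b), hadj, rfl⟩))
        rw [← Set.ncard_image_of_injective _ hinj1]
        exact Set.ncard_le_ncard (combine_linkAdh_inl_subset hb₁ hb₂ hcross a b)
          (Set.toFinite _)
      · obtain ⟨rfl, rfl⟩ := hadj
        exact hbr
      · obtain ⟨rfl, rfl⟩ := hadj
        rw [Sym2.eq_swap]
        exact hbr
      · refine le_trans ?_ (le_max_right _ _)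
        refine le_trans ?_ (D₂.le_width (Or.inl ⟨s(a, b), hadj, rfl⟩))
        rw [← Set.ncard_image_of_injective _ hinj2]
        exact Set.ncard_le_ncard (combine_linkAdh_inr_subset hb₁ hb₂ hcross a b)
          (Set.toFinite _)
  · rcases b with m | m
    · refine le_trans ?_ (le_max_left _ _)
      refine le_trans ?_ (D₁.le_width (Or.inr ⟨m, rfl⟩))
      have hbag : ((combine D₁ D₂ b₁ b₂ hdisj hcover).bag (Sum.inl m)).ncard =
          (D₁.bag m).ncard := Set.ncard_image_of_injective _ Subtype.val_injective
      have hadh : ((combine D₁ D₂ b₁ b₂ hdisj hcover).nodeAdh (Sum.inl m)).ncard ≤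
          (D₁.nodeAdh m).ncard := by
        rw [← Set.ncard_image_of_injective _ hinj1]
        exact Set.ncard_le_ncard (combine_nodeAdh_inl_subset hb₁ hb₂ hcross m)
          (Set.toFinite _)
      omega
    · refine le_trans ?_ (le_max_right _ _)
      refine le_trans ?_ (D₂.le_width (Or.inr ⟨m, rfl⟩))
      have hbag : ((combine D₁ D₂ b₁ b₂ hdisj hcover).bag (Sum.inr m)).ncard =
          (D₂.bag m).ncard := Set.ncard_image_of_injective _ Subtype.val_injective
      have hadh : ((combine D₁ D₂ b₁ b₂ hdisj hcover).nodeAdh (Sum.inr m)).ncard ≤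
          (D₂.nodeAdh m).ncard := by
        rw [← Set.ncard_image_of_injective _ hinj2]
        exact Set.ncard_le_ncard (combine_nodeAdh_inr_subset hb₁ hb₂ hcross m)
          (Set.toFinite _)
      omega

end Keys

/-- If `e = uv` is a bridge of the finite connected simple graph `G` (its deletion
disconnects `G`), and `G₁`, `G₂` are the two connected components of `G - e`
(the components of `u` and of `v`, respectively, viewed as induced subgraphs of `G`),
then `scw(G) = max {scw(G₁), scw(G₂)}`. -/
theorem screewidth_bridge [Finite V] (G : SimpleGraph V) (hG : G.Connected)
    (u v : V) (huv : G.Adj u v)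
    (hbridge : ¬ (G.deleteEdges {s(u, v)}).Connected) :
    screewidth G =
      max (screewidth (G.induce ((G.deleteEdges {s(u, v)}).connectedComponentMk u).supp))
          (screewidth (G.induce ((G.deleteEdges {s(u, v)}).connectedComponentMk v).supp)) := by
  set H := G.deleteEdges {s(u, v)} with hH
  set V₁ := (H.connectedComponentMk u).supp with hV₁
  set V₂ := (H.connectedComponentMk v).supp with hV₂
  have hnr : ¬ H.Reachable u v := by
    intro h
    apply hbridge
    have : Nonempty V := hG.nonempty
    exact Connected.mk (fun x y => reach_transfer h (hG.preconnected x y))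
  have hmem1 : ∀ x, x ∈ V₁ ↔ H.Reachable x u := by
    intro x
    rw [hV₁, SimpleGraph.ConnectedComponent.mem_supp_iff, SimpleGraph.ConnectedComponent.eq]
  have hmem2 : ∀ x, x ∈ V₂ ↔ H.Reachable x v := by
    intro x
    rw [hV₂, SimpleGraph.ConnectedComponent.mem_supp_iff, SimpleGraph.ConnectedComponent.eq]
  have hu1 : u ∈ V₁ := (hmem1 u).mpr (Reachable.refl u)
  have hv2 : v ∈ V₂ := (hmem2 v).mpr (Reachable.refl v)
  have hdisj : Disjoint V₁ V₂ := by
    rw [Set.disjoint_left]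
    intro x hx1 hx2
    exact hnr (((hmem1 x).mp hx1).symm.trans ((hmem2 x).mp hx2))
  have hcover : ∀ x : V, x ∈ V₁ ∨ x ∈ V₂ := fun x =>
    (reach_split (hG.preconnected x u)).imp (hmem1 x).mpr (hmem2 x).mpr
  have hcross : ∀ x y : V, G.Adj x y → x ∈ V₁ → y ∈ V₂ → x = u ∧ y = v := by
    intro x y hxy hx1 hy2
    by_cases he : s(x, y) = s(u, v)
    · rcases Sym2.eq_iff.mp he with ⟨rfl, rfl⟩ | ⟨h1, h2⟩
      · exact ⟨rfl, rfl⟩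
      · exfalso
        rw [h1] at hx1
        exact Set.disjoint_left.mp hdisj hx1 hv2
    · exfalso
      have hxyH : H.Reachable x y := Adj.reachable (by simp [hH, hxy, he])
      exact hnr ((((hmem1 x).mp hx1).symm.trans hxyH).trans ((hmem2 y).mp hy2))
  obtain ⟨D₁, hD₁⟩ := Nat.sInf_mem (screewidth_set_nonempty (G.induce V₁))
  obtain ⟨D₂, hD₂⟩ := Nat.sInf_mem (screewidth_set_nonempty (G.induce V₂))
  obtain ⟨b₁, hb₁⟩ := D₁.covers ⟨u, hu1⟩
  obtain ⟨b₂, hb₂⟩ := D₂.covers ⟨v, hv2⟩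
  apply le_antisymm
  · calc screewidth G ≤ (combine D₁ D₂ b₁ b₂ hdisj hcover).width := Nat.sInf_le ⟨_, rfl⟩
      _ ≤ max D₁.width D₂.width := combine_width_le hb₁ hb₂ hcross
      _ = _ := by rw [hD₁, hD₂]; rfl
  · exact max_le (screewidth_induce_le G _) (screewidth_induce_le G _)
end

section
/- For a finite connected simple graph G, scw(G) = 1 if and only if G is a tree (i.e., G is connected and acyclic). -/
open SimpleGraph

universe u

variable {V : Type u}

/-! ### Auxiliary lemmas -/

private lemma exists_cross_dart {W : Type*} {G : SimpleGraph W} (q : W → Prop) :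
    ∀ {u v : W} (p : G.Walk u v), q u → ¬ q v →
      ∃ d ∈ p.darts, q d.fst ∧ ¬ q d.snd := by
  intro u v p
  induction p with
  | nil => exact fun h h' => absurd h h'
  | @cons a b c h p ih =>
    intro hu hv
    by_cases hq : q b
    · obtain ⟨d, hd, hd2⟩ := ih hq hv
      exact ⟨d, by simp [SimpleGraph.Walk.darts_cons, hd], hd2⟩
    · exact ⟨⟨(a, b), h⟩, by simp [SimpleGraph.Walk.darts_cons], hu, hq⟩

private lemma tree_edge_mem_walk {W : Type*} {T : SimpleGraph W} (hT : T.IsAcyclic)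
    {x y : W} (h : T.Adj x y) (p : T.Walk x y) : s(x, y) ∈ p.edges := by
  by_contra hne
  have hre : (T \ SimpleGraph.fromEdgeSet {s(x, y)}).Reachable x y :=
    (SimpleGraph.reachable_delete_edges_iff_exists_walk).mpr ⟨p, hne⟩
  have hbr := (SimpleGraph.isAcyclic_iff_forall_edge_isBridge.mp hT)
    (T.mem_edgeSet.mpr h)
  exact (SimpleGraph.isBridge_iff.mp hbr) hre

private lemma widthSet_bddAbove [Finite V] {G : SimpleGraph V} (D : TreeCutDecomp G) :
    BddAbove ({n | ∃ l ∈ D.T.edgeSet, n = (D.linkAdh l).ncard} ∪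
        {n | ∃ b : D.B, n = (D.bag b).ncard + (D.nodeAdh b).ncard}) := by
  have := D.finB
  refine Set.Finite.bddAbove (Set.Finite.union ?_ ?_)
  · exact (Set.finite_range fun l : Sym2 D.B => (D.linkAdh l).ncard).subset
      (by rintro n ⟨l, -, rfl⟩; exact ⟨l, rfl⟩)
  · exact (Set.finite_range fun b : D.B => (D.bag b).ncard + (D.nodeAdh b).ncard).subset
      (by rintro n ⟨b, rfl⟩; exact ⟨b, rfl⟩)

private lemma one_le_width [Finite V] {G : SimpleGraph V} [Nonempty V]
    (D : TreeCutDecomp G) : 1 ≤ D.width := by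
  obtain ⟨v⟩ : Nonempty V := inferInstance
  obtain ⟨b, hb⟩ := D.covers v
  have h1 : 0 < (D.bag b).ncard := (Set.ncard_pos (Set.toFinite _)).mpr ⟨v, hb⟩
  have h2 : (D.bag b).ncard + (D.nodeAdh b).ncard ≤ D.width :=
    le_csSup (widthSet_bddAbove D) (Or.inr ⟨b, rfl⟩)
  omega

/-- Any tree-cut decomposition of width `1` certifies acyclicity. -/
private lemma isAcyclic_of_width_eq_one [Finite V] {G : SimpleGraph V}
    (D : TreeCutDecomp G) (hD : D.width = 1) : G.IsAcyclic := by
  classical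
  intro a c hc
  have hfinB := D.finB
  have hle : ∀ n ∈ ({n | ∃ l ∈ D.T.edgeSet, n = (D.linkAdh l).ncard} ∪
      {n | ∃ b : D.B, n = (D.bag b).ncard + (D.nodeAdh b).ncard}), n ≤ 1 := by
    intro n hn
    have : n ≤ D.width := le_csSup (widthSet_bddAbove D) hn
    omega
  have hb1 : ∀ b : D.B, (D.bag b).ncard ≤ 1 := by
    intro b
    have := hle _ (Or.inr ⟨b, rfl⟩)
    omega
  have hl1 : ∀ l ∈ D.T.edgeSet, (D.linkAdh l).ncard ≤ 1 := fun l hl =>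
    hle _ (Or.inl ⟨l, hl, rfl⟩)
  set f : V → D.B := fun u => (D.covers u).choose with hfdef
  have hfb : ∀ u, u ∈ D.bag (f u) := fun u => (D.covers u).choose_spec
  have hfinj : Function.Injective f := by
    intro u u' h
    by_contra hne
    have hsub : ({u, u'} : Set V) ⊆ D.bag (f u) := by
      intro z hz
      rcases hz with rfl | hz
      · exact hfb _
      · rw [Set.mem_singleton_iff] at hz
        subst hz
        rw [h]
        exact hfb _
    have h2 : 2 ≤ (D.bag (f u)).ncard := by
      rw [← Set.ncard_pair hne]
      exact Set.ncard_le_ncard hsub (Set.toFinite _)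
    have := hb1 (f u)
    omega
  cases c with
  | nil => exact hc.ne_nil rfl
  | @cons _ w _ hadj q =>
    have hfaw : f a ≠ f w := fun h => hadj.ne (hfinj h)
    obtain ⟨p0⟩ := D.isTree.isConnected (f a) (f w)
    obtain ⟨y, hxy, rest, hconseq⟩ :=
      SimpleGraph.Walk.exists_eq_cons_of_ne hfaw (p0.toPath : D.T.Path (f a) (f w)).1
    have hlE : s(f a, y) ∈ D.T.edgeSet := hxy
    have hrestl : s(f a, y) ∉ rest.edges := by
      intro hmem
      have h1 : f a ∈ rest.support := rest.fst_mem_support_of_mem_edges hmem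
      have h2 := (p0.toPath : D.T.Path (f a) (f w)).2.support_nodup
      rw [hconseq, SimpleGraph.Walk.support_cons] at h2
      exact (List.nodup_cons.mp h2).1 h1
    have hyw : (D.T.deleteEdges {s(f a, y)}).Reachable y (f w) :=
      ⟨rest.toDeleteEdges {s(f a, y)}
        (fun e he h' => hrestl ((Set.mem_singleton_iff.mp h') ▸ he))⟩
    have hsa : (D.T.deleteEdges {s(f a, y)}).Reachable (f a) (f a) := Reachable.refl _
    have hnsw : ¬ (D.T.deleteEdges {s(f a, y)}).Reachable (f a) (f w) := by
      intro hr
      have h2 : (D.T.deleteEdges {s(f a, y)}).Reachable (f a) y := hr.trans hyw.symm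
      have hbr := (SimpleGraph.isAcyclic_iff_forall_edge_isBridge.mp D.isTree.2) hlE
      exact (SimpleGraph.isBridge_iff.mp hbr) h2
    have hcrossmem : ∀ d : G.Dart, d ∈ (SimpleGraph.Walk.cons hadj q).darts →
        ¬ ((D.T.deleteEdges {s(f a, y)}).Reachable (f a) (f d.fst) ↔
           (D.T.deleteEdges {s(f a, y)}).Reachable (f a) (f d.snd)) →
        d.edge ∈ D.linkAdh s(f a, y) := by
      intro d _ hiff
      refine ⟨d.edge_mem, d.fst, d.snd, f d.fst, f d.snd, rfl, hfb _, hfb _, ?_⟩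
      intro p
      by_contra hnl
      have hreach : (D.T.deleteEdges {s(f a, y)}).Reachable (f d.fst) (f d.snd) :=
        ⟨p.toDeleteEdges {s(f a, y)}
          (fun e he h' => hnl ((Set.mem_singleton_iff.mp h') ▸ he))⟩
      exact hiff ⟨fun h => h.trans hreach, fun h => h.trans hreach.symm⟩
    have hd1mem : (⟨(a, w), hadj⟩ : G.Dart) ∈ (SimpleGraph.Walk.cons hadj q).darts := by
      simp [SimpleGraph.Walk.darts_cons]
    obtain ⟨d2, hd2q, hd2f, hd2s⟩ := exists_cross_dart
      (fun u => ¬ (D.T.deleteEdges {s(f a, y)}).Reachable (f a) (f u)) q hnsw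
      (not_not_intro hsa)
    have hd2mem : d2 ∈ (SimpleGraph.Walk.cons hadj q).darts := by
      simp [SimpleGraph.Walk.darts_cons, hd2q]
    have he1 : (⟨(a, w), hadj⟩ : G.Dart).edge ∈ D.linkAdh s(f a, y) :=
      hcrossmem _ hd1mem (fun h => hnsw (h.mp hsa))
    have he2 : d2.edge ∈ D.linkAdh s(f a, y) :=
      hcrossmem _ hd2mem (fun h => hd2s (fun hs => hd2f (h.mpr hs)))
    have hne12 : (⟨(a, w), hadj⟩ : G.Dart).edge ≠ d2.edge := by
      intro h
      have hnodup : ((SimpleGraph.Walk.cons hadj q).darts.map SimpleGraph.Dart.edge).Nodup :=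
        hc.edges_nodup
      have heq := List.inj_on_of_nodup_map hnodup hd1mem hd2mem h
      rw [← heq] at hd2f
      exact hd2f hsa
    have h2le : 2 ≤ (D.linkAdh s(f a, y)).ncard := by
      rw [← Set.ncard_pair hne12]
      refine Set.ncard_le_ncard ?_ (Set.toFinite _)
      intro z hz
      rcases hz with rfl | hz
      · exact he1
      · exact (Set.mem_singleton_iff.mp hz) ▸ he2
    have := hl1 _ hlE
    omega

/-- The tree-cut decomposition of a tree given by singleton bags on an isomorphic
copy of the tree on `Fin n`. -/
@[reducible] private noncomputable def TreeCutDecomp.ofTree [Finite V] {G : SimpleGraph V}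
    (hT : G.IsTree) {n : ℕ} (e : V ≃ Fin n) : TreeCutDecomp G where
  B := Fin n
  finB := inferInstance
  T := { Adj := fun x z => G.Adj (e.symm x) (e.symm z)
         symm := ⟨fun x z h => h.symm⟩
         loopless := ⟨fun x h => G.loopless.irrefl _ h⟩ }
  isTree := by
    constructor
    · have hiso : G ≃g
          ({ Adj := fun x z => G.Adj (e.symm x) (e.symm z)
             symm := ⟨fun x z h => h.symm⟩
             loopless := ⟨fun x h => G.loopless.irrefl _ h⟩ } : SimpleGraph (Fin n)) :=
        ⟨e, by intro u v; simp⟩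
      exact hiso.connected_iff.mp hT.isConnected
    · intro x c hcyc
      have hiso : G ≃g
          ({ Adj := fun x z => G.Adj (e.symm x) (e.symm z)
             symm := ⟨fun x z h => h.symm⟩
             loopless := ⟨fun x h => G.loopless.irrefl _ h⟩ } : SimpleGraph (Fin n)) :=
        ⟨e, by intro u v; simp⟩
      have := hcyc.map (f := hiso.symm.toHom) hiso.symm.injective
      exact hT.2 _ this
  bag := fun b => {e.symm b}
  disj := fun b d hbd => Set.disjoint_singleton.mpr (fun h => hbd (e.symm.injective h))
  covers := fun v => ⟨e v, by simp⟩

private lemma width_ofTree [Finite V] {G : SimpleGraph V} (hT : G.IsTree) {n : ℕ}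
    (e : V ≃ Fin n) (hn : 0 < n) : (TreeCutDecomp.ofTree hT e).width = 1 := by
  classical
  set D := TreeCutDecomp.ofTree hT e with hDdef
  have hTacy : D.T.IsAcyclic := D.isTree.2
  have hbag : ∀ b : D.B, D.bag b = {e.symm b} := fun b => rfl
  have hTadj : ∀ x z : D.B, D.T.Adj x z ↔ G.Adj (e.symm x) (e.symm z) := fun x z => Iff.rfl
  -- node adhesions are empty
  have hnode : ∀ b : D.B, D.nodeAdh b = ∅ := by
    intro b
    ext ed
    simp only [TreeCutDecomp.nodeAdh, Set.mem_setOf_eq, Set.mem_empty_iff_false, iff_false]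
    rintro ⟨hE, v, w, b1, d1, rfl, hv, hw, hb1, hd1, hall⟩
    have hb1v : b1 = e v := by
      have := Set.mem_singleton_iff.mp (hbag b1 ▸ hv)
      rw [this]; simp
    have hd1w : d1 = e w := by
      have := Set.mem_singleton_iff.mp (hbag d1 ▸ hw)
      rw [this]; simp
    subst hb1v hd1w
    have hadj' : D.T.Adj (e v) (e w) := by
      rw [hTadj]
      simpa using (G.mem_edgeSet.mp hE)
    have hmem := hall (SimpleGraph.Walk.cons hadj' SimpleGraph.Walk.nil)
    simp only [SimpleGraph.Walk.support_cons, SimpleGraph.Walk.support_nil,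
      List.mem_cons, List.mem_singleton] at hmem
    rcases hmem with h | h | h
    · exact hb1 h.symm
    · exact hd1 h.symm
    · exact (List.not_mem_nil h)
  -- link adhesions are singletons
  have hlink : ∀ x z : D.B, D.T.Adj x z →
      D.linkAdh s(x, z) = {s(e.symm x, e.symm z)} := by
    intro x z hxz
    ext ed
    simp only [TreeCutDecomp.linkAdh, Set.mem_setOf_eq, Set.mem_singleton_iff]
    constructor
    · rintro ⟨hE, v, w, b1, d1, rfl, hv, hw, hall⟩
      have hb1v : b1 = e v := by
        have := Set.mem_singleton_iff.mp (hbag b1 ▸ hv)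
        rw [this]; simp
      have hd1w : d1 = e w := by
        have := Set.mem_singleton_iff.mp (hbag d1 ▸ hw)
        rw [this]; simp
      subst hb1v hd1w
      have hadj' : D.T.Adj (e v) (e w) := by
        rw [hTadj]
        simpa using (G.mem_edgeSet.mp hE)
      have hmem := hall (SimpleGraph.Walk.cons hadj' SimpleGraph.Walk.nil)
      simp only [SimpleGraph.Walk.edges_cons, SimpleGraph.Walk.edges_nil,
        List.mem_singleton] at hmem
      rw [Sym2.eq_iff] at hmem
      rcases hmem with ⟨h1, h2⟩ | ⟨h1, h2⟩
      · rw [h1, h2]; simp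
      · rw [h1, h2]
        simp only [Equiv.symm_apply_apply]
        exact Sym2.eq_swap
    · rintro rfl
      refine ⟨G.mem_edgeSet.mpr ((hTadj x z).mp hxz), e.symm x, e.symm z, x, z, rfl,
        rfl, rfl, ?_⟩
      intro p
      exact tree_edge_mem_walk hTacy hxz p
  -- the width set is {1}
  have hset : ({m | ∃ l ∈ D.T.edgeSet, m = (D.linkAdh l).ncard} ∪
      {m | ∃ b : D.B, m = (D.bag b).ncard + (D.nodeAdh b).ncard}) = {1} := by
    ext m
    simp only [Set.mem_union, Set.mem_setOf_eq, Set.mem_singleton_iff]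
    constructor
    · rintro (⟨l, hl, rfl⟩ | ⟨b, rfl⟩)
      · induction l using Sym2.ind with
        | _ x z =>
          rw [hlink x z (D.T.mem_edgeSet.mp hl)]
          exact Set.ncard_singleton _
      · rw [hbag b, hnode b]
        simp
    · rintro rfl
      refine Or.inr ⟨⟨0, hn⟩, ?_⟩
      rw [hbag _, hnode _]
      simp
  show sSup _ = 1
  rw [hset, csSup_singleton]

/-- For a finite connected simple graph `G`, `scw(G) = 1` if and only if `G` is a tree
(connected and acyclic). -/
theorem screewidth_eq_one_iff_isTree [Finite V] (G : SimpleGraph V) (hG : G.Connected) :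
    screewidth G = 1 ↔ G.IsTree := by
  classical
  have hV : Nonempty V := hG.nonempty
  constructor
  · intro h1
    have hne : {n | ∃ D : TreeCutDecomp G, D.width = n}.Nonempty := by
      by_contra h
      rw [Set.not_nonempty_iff_eq_empty] at h
      rw [screewidth, h, Nat.sInf_empty] at h1
      exact one_ne_zero h1.symm
    have hmem := Nat.sInf_mem hne
    rw [show sInf {n | ∃ D : TreeCutDecomp G, D.width = n} = screewidth G from rfl,
      h1] at hmem
    obtain ⟨D, hD⟩ := hmem
    exact ⟨hG, isAcyclic_of_width_eq_one D hD⟩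
  · intro hT
    obtain ⟨n, ⟨e⟩⟩ := Finite.exists_equiv_fin V
    have hn : 0 < n := (e (Classical.arbitrary V)).pos
    refine le_antisymm ?_ ?_
    · exact Nat.sInf_le ⟨TreeCutDecomp.ofTree hT e, width_ofTree hT e hn⟩
    · refine le_csInf ⟨1, TreeCutDecomp.ofTree hT e, width_ofTree hT e hn⟩ ?_
      rintro m ⟨D', rfl⟩
      exact one_le_width D'
end

section
/- For a finite connected simple graph G on n ≥ 2 vertices, scw(G) = n − 1 if and only if G is the complete graph K_n. -/
open SimpleGraph

universe u

variable {V : Type u}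

/- ## auxiliary lemmas -/

lemma aux_ncard_le_natCard {X : Type*} [Finite X] (s : Set X) : s.ncard ≤ Nat.card X := by
  rw [← Set.ncard_univ]
  exact Set.ncard_le_ncard (Set.subset_univ s) Set.finite_univ

namespace TreeCutDecomp

variable [Finite V] {G : SimpleGraph V}

lemma width_bddAbove (D : TreeCutDecomp G) :
    BddAbove ({n | ∃ l ∈ D.T.edgeSet, n = (D.linkAdh l).ncard} ∪
        {n | ∃ b : D.B, n = (D.bag b).ncard + (D.nodeAdh b).ncard}) := by
  refine ⟨Nat.card V + Nat.card (Sym2 V), ?_⟩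
  rintro n (⟨l, hl, rfl⟩ | ⟨b, rfl⟩)
  · exact le_trans (aux_ncard_le_natCard _) (Nat.le_add_left _ _)
  · exact Nat.add_le_add (aux_ncard_le_natCard _) (aux_ncard_le_natCard _)

lemma width_le_s10 (D : TreeCutDecomp G) {K : ℕ}
    (h1 : ∀ l ∈ D.T.edgeSet, (D.linkAdh l).ncard ≤ K)
    (h2 : ∀ b : D.B, (D.bag b).ncard + (D.nodeAdh b).ncard ≤ K) : D.width ≤ K := by
  apply csSup_le'
  rintro n (⟨l, hl, rfl⟩ | ⟨b, rfl⟩)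
  · exact h1 l hl
  · exact h2 b

lemma le_width_node (D : TreeCutDecomp G) (b : D.B) :
    (D.bag b).ncard + (D.nodeAdh b).ncard ≤ D.width :=
  le_csSup (D.width_bddAbove) (Or.inr ⟨b, rfl⟩)

lemma le_width_link (D : TreeCutDecomp G) {l : Sym2 D.B} (hl : l ∈ D.T.edgeSet) :
    (D.linkAdh l).ncard ≤ D.width :=
  le_csSup (D.width_bddAbove) (Or.inl ⟨l, hl, rfl⟩)

end TreeCutDecomp

section PathGraph3

lemma exists_first_edge {X : Type*} {H : SimpleGraph X} {a b : X} (hab : a ≠ b) (p : H.Walk a b) :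
    ∃ x, H.Adj a x ∧ s(a, x) ∈ p.edges := by
  cases p with
  | nil => exact absurd rfl hab
  | cons h q => exact ⟨_, h, by simp⟩

lemma pg3_adj_zero {x : Fin 3} (h : (pathGraph 3).Adj 0 x) : x = 1 := by
  rw [pathGraph_adj] at h; fin_cases x <;> simp_all

lemma pg3_adj_two {x : Fin 3} (h : (pathGraph 3).Adj 2 x) : x = 1 := by
  rw [pathGraph_adj] at h; fin_cases x <;> simp_all

lemma pg3_a01 : (pathGraph 3).Adj 0 1 := by rw [pathGraph_adj]; decide
lemma pg3_a12 : (pathGraph 3).Adj 1 2 := by rw [pathGraph_adj]; decide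

lemma pg3_walk01 (p : (pathGraph 3).Walk 0 1) : s((0 : Fin 3), 1) ∈ p.edges := by
  obtain ⟨x, hx, hmem⟩ := exists_first_edge (by decide) p
  rwa [pg3_adj_zero hx] at hmem

lemma pg3_walk21 (p : (pathGraph 3).Walk 2 1) : s((2 : Fin 3), 1) ∈ p.edges := by
  obtain ⟨x, hx, hmem⟩ := exists_first_edge (by decide) p
  rwa [pg3_adj_two hx] at hmem

lemma pg3_isTree : (pathGraph 3).IsTree := by
  constructor
  · exact pathGraph_connected 2
  · rw [isAcyclic_iff_forall_adj_isBridge]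
    intro v w hadj
    have h' := pathGraph_adj.mp hadj
    fin_cases v <;> fin_cases w <;> simp only [Fin.isValue] at hadj ⊢ <;>
      first
      | (exact absurd h' (by decide))
      | (exact isBridge_iff_adj_and_forall_walk_mem_edges.mpr (fun p => pg3_walk01 p))
      | (exact isBridge_iff_adj_and_forall_walk_mem_edges.mpr (fun p => by
          have := pg3_walk01 p.reverse
          rw [Walk.edges_reverse, List.mem_reverse] at this
          rwa [Sym2.eq_swap] at this))
      | (exact isBridge_iff_adj_and_forall_walk_mem_edges.mpr (fun p => pg3_walk21 p))
      | (exact isBridge_iff_adj_and_forall_walk_mem_edges.mpr (fun p => by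
          have := pg3_walk21 p.reverse
          rw [Walk.edges_reverse, List.mem_reverse] at this
          rwa [Sym2.eq_swap] at this))

lemma pg3_edge {l : Sym2 (Fin 3)} (hl : l ∈ (pathGraph 3).edgeSet) :
    l = s((0:Fin 3), 1) ∨ l = s((1:Fin 3), 2) := by
  induction l with
  | _ a b =>
    rw [mem_edgeSet, pathGraph_adj] at hl
    fin_cases a <;> fin_cases b <;>
      first
      | (exact absurd hl (by decide))
      | (exact Or.inl (by decide))
      | (exact Or.inr (by decide))

end PathGraph3

section TreeLemmas

lemma tree_not_reachable_deleteEdges {X : Type*} {T : SimpleGraph X} (hT : T.IsTree) {x y : X}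
    (h : T.Adj x y) : ¬(T.deleteEdges {s(x, y)}).Reachable x y := by
  have hb := (isAcyclic_iff_forall_adj_isBridge.mp hT.IsAcyclic) h
  rw [isBridge_iff] at hb
  exact hb

lemma mem_edges_of_not_reachable {X : Type*} {T : SimpleGraph X} {l : Sym2 X} {c d : X}
    (h : ¬(T.deleteEdges {l}).Reachable c d) (p : T.Walk c d) : l ∈ p.edges := by
  by_contra hl
  exact h ⟨p.toDeleteEdges {l} (fun e he hmem => hl (by rwa [Set.mem_singleton_iff.mp hmem] at he))⟩

lemma reachable_side_aux {X : Type*} {T : SimpleGraph X} {x y c z : X}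
    (w : T.Walk c z) :
    (T.deleteEdges {s(x, y)}).Reachable c z ∨ (T.deleteEdges {s(x, y)}).Reachable c x ∨
      (T.deleteEdges {s(x, y)}).Reachable c y := by
  induction w with
  | nil => exact Or.inl (Reachable.refl _)
  | @cons a a' _ h p ih =>
    by_cases he : s(a, a') = s(x, y)
    · rw [Sym2.eq_iff] at he
      rcases he with ⟨rfl, rfl⟩ | ⟨rfl, rfl⟩
      · exact Or.inr (Or.inl (Reachable.refl _))
      · exact Or.inr (Or.inr (Reachable.refl _))
    · have hadj : (T.deleteEdges {s(x, y)}).Adj a a' :=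
        deleteEdges_adj.mpr ⟨h, by simpa using he⟩
      rcases ih with h1 | h1 | h1
      · exact Or.inl (hadj.reachable.trans h1)
      · exact Or.inr (Or.inl (hadj.reachable.trans h1))
      · exact Or.inr (Or.inr (hadj.reachable.trans h1))

lemma reachable_side {X : Type*} {T : SimpleGraph X} (hT : T.Connected) (x y c : X) :
    (T.deleteEdges {s(x, y)}).Reachable c x ∨ (T.deleteEdges {s(x, y)}).Reachable c y := by
  obtain ⟨w⟩ := hT.preconnected c x
  rcases reachable_side_aux (x := x) (y := y) w with h | h | h
  · exact Or.inl h
  · exact Or.inl h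
  · exact Or.inr h

end TreeLemmas

section Star

variable [Finite V] (G : SimpleGraph V)

/-- The star decomposition: center bag `{u,v}ᶜ` with two leaves `{u}` and `{v}`. -/
noncomputable def starDecomp (u v : V) (huv : u ≠ v) : TreeCutDecomp G where
  B := Fin 3
  finB := inferInstance
  T := pathGraph 3
  isTree := pg3_isTree
  bag := fun b => if b = 0 then {u} else if b = 1 then ({u, v} : Set V)ᶜ else {v}
  disj := by
    intro b d hbd
    fin_cases b <;> fin_cases d <;> simp_all [Set.disjoint_left] <;> tauto
  covers := by
    intro w
    by_cases hu : w = u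
    · exact ⟨0, by simp [hu]⟩
    · by_cases hv : w = v
      · exact ⟨2, by simp [hv]⟩
      · exact ⟨1, by simp [hu, hv]⟩

variable {G}

lemma starDecomp_bag0 {u v : V} (huv : u ≠ v) :
    (starDecomp G u v huv).bag ((0 : Fin 3)) = {u} := by
  simp [starDecomp]
lemma starDecomp_bag1 {u v : V} (huv : u ≠ v) :
    (starDecomp G u v huv).bag ((1 : Fin 3)) = ({u, v} : Set V)ᶜ := by simp [starDecomp]
lemma starDecomp_bag2 {u v : V} (huv : u ≠ v) :
    (starDecomp G u v huv).bag ((2 : Fin 3)) = {v} := by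
  simp [starDecomp]

end Star
section StarBounds
variable [Finite V] {G : SimpleGraph V}

lemma fin3_cases (i : Fin 3) : i = 0 ∨ i = 1 ∨ i = 2 := by fin_cases i <;> simp

def pg3_w12 : (pathGraph 3).Walk 1 2 := Walk.cons pg3_a12 Walk.nil
def pg3_w21 : (pathGraph 3).Walk 2 1 := Walk.cons pg3_a12.symm Walk.nil
def pg3_w01 : (pathGraph 3).Walk 0 1 := Walk.cons pg3_a01 Walk.nil
def pg3_w10 : (pathGraph 3).Walk 1 0 := Walk.cons pg3_a01.symm Walk.nil

lemma starDecomp_linkAdh01 {u v : V} (huv : u ≠ v) :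
    (starDecomp G u v huv).linkAdh s((0 : Fin 3), (1 : Fin 3)) ⊆
      (fun x => s(u, x)) '' (G.neighborSet u) := by
  rintro e ⟨heE, a, w', i, j, rfl, hai, hwj, hwalk⟩
  rcases fin3_cases i with rfl | rfl | rfl <;> rcases fin3_cases j with rfl | rfl | rfl
  case inr.inl.inr.inl => have h : s((0:Fin 3),1) ∈ (Walk.nil : (pathGraph 3).Walk 1 1).edges := hwalk Walk.nil; simp at h
  case inr.inr.inr.inr => have h : s((0:Fin 3),1) ∈ (Walk.nil : (pathGraph 3).Walk 2 2).edges := hwalk Walk.nil; simp at h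
  case inr.inl.inr.inr =>
    have h : s((0:Fin 3),1) ∈ pg3_w12.edges := hwalk pg3_w12; simp [pg3_w12] at h
  case inr.inr.inr.inl =>
    have h : s((0:Fin 3),1) ∈ pg3_w21.edges := hwalk pg3_w21; simp [pg3_w21] at h
  case inr.inl.inl =>
    rw [starDecomp_bag0 huv, Set.mem_singleton_iff] at hwj; subst hwj
    exact ⟨a, (G.mem_edgeSet.mp heE).symm, Sym2.eq_swap⟩
  case inr.inr.inl =>
    rw [starDecomp_bag0 huv, Set.mem_singleton_iff] at hwj; subst hwj
    exact ⟨a, (G.mem_edgeSet.mp heE).symm, Sym2.eq_swap⟩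
  all_goals {
    rw [starDecomp_bag0 huv, Set.mem_singleton_iff] at hai; subst hai
    exact ⟨w', G.mem_edgeSet.mp heE, rfl⟩ }

lemma starDecomp_linkAdh12 {u v : V} (huv : u ≠ v) :
    (starDecomp G u v huv).linkAdh s((1 : Fin 3), (2 : Fin 3)) ⊆
      (fun x => s(v, x)) '' (G.neighborSet v) := by
  rintro e ⟨heE, a, w', i, j, rfl, hai, hwj, hwalk⟩
  rcases fin3_cases i with rfl | rfl | rfl <;> rcases fin3_cases j with rfl | rfl | rfl
  case inl.inl => have h : s((1:Fin 3),2) ∈ (Walk.nil : (pathGraph 3).Walk 0 0).edges := hwalk Walk.nil; simp at h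
  case inr.inl.inr.inl => have h : s((1:Fin 3),2) ∈ (Walk.nil : (pathGraph 3).Walk 1 1).edges := hwalk Walk.nil; simp at h
  case inl.inr.inl =>
    have h : s((1:Fin 3),2) ∈ pg3_w01.edges := hwalk pg3_w01; simp [pg3_w01] at h
  case inr.inl.inl =>
    have h : s((1:Fin 3),2) ∈ pg3_w10.edges := hwalk pg3_w10; simp [pg3_w10] at h
  case inl.inr.inr =>
    rw [starDecomp_bag2 huv, Set.mem_singleton_iff] at hwj; subst hwj
    exact ⟨a, (G.mem_edgeSet.mp heE).symm, Sym2.eq_swap⟩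
  case inr.inl.inr.inr =>
    rw [starDecomp_bag2 huv, Set.mem_singleton_iff] at hwj; subst hwj
    exact ⟨a, (G.mem_edgeSet.mp heE).symm, Sym2.eq_swap⟩
  all_goals {
    rw [starDecomp_bag2 huv, Set.mem_singleton_iff] at hai; subst hai
    exact ⟨w', G.mem_edgeSet.mp heE, rfl⟩ }

lemma starDecomp_nodeAdh0 {u v : V} (huv : u ≠ v) :
    (starDecomp G u v huv).nodeAdh ((0 : Fin 3)) = ∅ := by
  rw [Set.eq_empty_iff_forall_notMem]
  rintro e ⟨heE, a, w', i, j, rfl, hai, hwj, hi, hj, hwalk⟩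
  rcases fin3_cases i with rfl | rfl | rfl <;> rcases fin3_cases j with rfl | rfl | rfl
  case inl.inl => exact absurd rfl hi
  case inl.inr.inl => exact absurd rfl hi
  case inl.inr.inr => exact absurd rfl hi
  case inr.inl.inl => exact absurd rfl hj
  case inr.inr.inl => exact absurd rfl hj
  case inr.inl.inr.inl =>
    have h : (0:Fin 3) ∈ (Walk.nil : (pathGraph 3).Walk 1 1).support := hwalk Walk.nil; simp at h
  case inr.inr.inr.inr =>
    have h : (0:Fin 3) ∈ (Walk.nil : (pathGraph 3).Walk 2 2).support := hwalk Walk.nil; simp at h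
  case inr.inl.inr.inr =>
    have h : (0:Fin 3) ∈ pg3_w12.support := hwalk pg3_w12; simp [pg3_w12] at h
  case inr.inr.inr.inl =>
    have h : (0:Fin 3) ∈ pg3_w21.support := hwalk pg3_w21; simp [pg3_w21] at h

lemma starDecomp_nodeAdh2 {u v : V} (huv : u ≠ v) :
    (starDecomp G u v huv).nodeAdh ((2 : Fin 3)) = ∅ := by
  rw [Set.eq_empty_iff_forall_notMem]
  rintro e ⟨heE, a, w', i, j, rfl, hai, hwj, hi, hj, hwalk⟩
  rcases fin3_cases i with rfl | rfl | rfl <;> rcases fin3_cases j with rfl | rfl | rfl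
  case inr.inr.inl => exact absurd rfl hi
  case inr.inr.inr.inl => exact absurd rfl hi
  case inr.inr.inr.inr => exact absurd rfl hi
  case inl.inr.inr => exact absurd rfl hj
  case inr.inl.inr.inr => exact absurd rfl hj
  case inl.inl =>
    have h : (2:Fin 3) ∈ (Walk.nil : (pathGraph 3).Walk 0 0).support := hwalk Walk.nil; simp at h
  case inr.inl.inr.inl =>
    have h : (2:Fin 3) ∈ (Walk.nil : (pathGraph 3).Walk 1 1).support := hwalk Walk.nil; simp at h
  case inl.inr.inl =>
    have h : (2:Fin 3) ∈ pg3_w01.support := hwalk pg3_w01; simp [pg3_w01] at h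
  case inr.inl.inl =>
    have h : (2:Fin 3) ∈ pg3_w10.support := hwalk pg3_w10; simp [pg3_w10] at h

lemma starDecomp_nodeAdh1 {u v : V} (huv : u ≠ v) :
    (starDecomp G u v huv).nodeAdh ((1 : Fin 3)) ⊆ G.edgeSet ∩ {s(u, v)} := by
  rintro e ⟨heE, a, w', i, j, rfl, hai, hwj, hi, hj, hwalk⟩
  rcases fin3_cases i with rfl | rfl | rfl <;> rcases fin3_cases j with rfl | rfl | rfl
  case inl.inl =>
    have h : (1:Fin 3) ∈ (Walk.nil : (pathGraph 3).Walk 0 0).support := hwalk Walk.nil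
    simp at h
  case inl.inr.inl => exact absurd rfl hj
  case inl.inr.inr =>
    rw [starDecomp_bag0 huv, Set.mem_singleton_iff] at hai
    rw [starDecomp_bag2 huv, Set.mem_singleton_iff] at hwj
    subst hai; subst hwj
    exact ⟨heE, rfl⟩
  case inr.inl.inl => exact absurd rfl hi
  case inr.inl.inr.inl => exact absurd rfl hi
  case inr.inl.inr.inr => exact absurd rfl hi
  case inr.inr.inl =>
    rw [starDecomp_bag2 huv, Set.mem_singleton_iff] at hai
    rw [starDecomp_bag0 huv, Set.mem_singleton_iff] at hwj
    subst hai; subst hwj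
    exact ⟨heE, by rw [Set.mem_singleton_iff]; exact Sym2.eq_swap⟩
  case inr.inr.inr.inl => exact absurd rfl hj
  case inr.inr.inr.inr =>
    have h : (1:Fin 3) ∈ (Walk.nil : (pathGraph 3).Walk 2 2).support := hwalk Walk.nil
    simp at h

end StarBounds

section WidthBounds

variable [Finite V] {G : SimpleGraph V}

lemma ncard_compl_singleton (u : V) : ({u}ᶜ : Set V).ncard = Nat.card V - 1 := by
  rw [Set.compl_eq_univ_diff, Set.ncard_diff (Set.subset_univ _), Set.ncard_univ,
    Set.ncard_singleton]

lemma ncard_compl_pair {u v : V} (huv : u ≠ v) :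
    (({u, v} : Set V)ᶜ).ncard = Nat.card V - 2 := by
  rw [Set.compl_eq_univ_diff, Set.ncard_diff (Set.subset_univ _), Set.ncard_univ,
    Set.ncard_pair huv]

lemma starDecomp_width_le {u v : V} (huv : u ≠ v) {K : ℕ}
    (h1 : (G.neighborSet u).ncard ≤ K) (h2 : (G.neighborSet v).ncard ≤ K)
    (h3 : (({u, v} : Set V)ᶜ).ncard + (G.edgeSet ∩ {s(u, v)}).ncard ≤ K)
    (h4 : 1 ≤ K) :
    (starDecomp G u v huv).width ≤ K := by
  apply TreeCutDecomp.width_le_s10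
  · intro l hl
    rcases pg3_edge hl with rfl | rfl
    · exact le_trans (Set.ncard_le_ncard (starDecomp_linkAdh01 huv) (Set.toFinite _))
        (le_trans (Set.ncard_image_le (Set.toFinite _)) h1)
    · exact le_trans (Set.ncard_le_ncard (starDecomp_linkAdh12 huv) (Set.toFinite _))
        (le_trans (Set.ncard_image_le (Set.toFinite _)) h2)
  · intro b
    rcases fin3_cases b with rfl | rfl | rfl
    · rw [starDecomp_bag0 huv, starDecomp_nodeAdh0 huv, Set.ncard_singleton, Set.ncard_empty]
      exact h4
    · rw [starDecomp_bag1 huv]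
      exact le_trans (Nat.add_le_add_left
        (Set.ncard_le_ncard (starDecomp_nodeAdh1 huv) (Set.toFinite _)) _) h3
    · rw [starDecomp_bag2 huv, starDecomp_nodeAdh2 huv, Set.ncard_singleton, Set.ncard_empty]
      exact h4

lemma width_lower_of_complete (hadj : ∀ a b : V, a ≠ b → G.Adj a b) (hn : 2 ≤ Nat.card V)
    (D : TreeCutDecomp G) : Nat.card V - 1 ≤ D.width := by
  classical
  have hnt : Nontrivial V := Finite.one_lt_card_iff_nontrivial.mp (by omega)
  obtain ⟨x, y, hxy⟩ := exists_pair_ne V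
  by_cases hone : ∀ (b d : D.B) (vb : V), vb ∈ D.bag b → ∀ wd : V, wd ∈ D.bag d → b = d
  · obtain ⟨b0, hb0⟩ := D.covers x
    have huniv : ∀ w : V, w ∈ D.bag b0 := fun w => by
      obtain ⟨d, hd⟩ := D.covers w
      have := hone d b0 w hd x hb0
      exact this ▸ hd
    have hcard : Nat.card V ≤ (D.bag b0).ncard := by
      rw [← Set.ncard_univ]
      exact Set.ncard_le_ncard (fun w _ => huniv w) (Set.toFinite _)
    have := D.le_width_node b0
    omega
  · push_neg at hone
    obtain ⟨b, d, vb, hvb, wd, hwd, hbd⟩ := hone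
    obtain ⟨wlk⟩ := D.isTree.isConnected.preconnected b d
    obtain ⟨q, hq⟩ := wlk.toPath
    cases q with
    | nil => exact absurd rfl hbd
    | @cons _ c _ hbc r =>
      rw [Walk.cons_isPath_iff] at hq
      have hnbc : ¬(D.T.deleteEdges {s(b, c)}).Reachable b c :=
        tree_not_reachable_deleteEdges D.isTree hbc
      have hrd : (D.T.deleteEdges {s(b, c)}).Reachable c d :=
        ⟨r.toDeleteEdges {s(b, c)} (fun e he hmem => by
          rw [Set.mem_singleton_iff] at hmem
          subst hmem
          exact hq.2 (Walk.fst_mem_support_of_mem_edges r he))⟩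
      have hndb : ¬(D.T.deleteEdges {s(b, c)}).Reachable d b := fun hr =>
        hnbc (hrd.trans hr).symm
      set A : Set V := {z | ∃ c', z ∈ D.bag c' ∧ (D.T.deleteEdges {s(b, c)}).Reachable c' b}
        with hA
      have hvA : vb ∈ A := ⟨b, hvb, Reachable.refl b⟩
      have hwA : wd ∉ A := by
        rintro ⟨c', hc', hre⟩
        have hcd : c' = d := by
          by_contra hne
          exact Set.disjoint_left.mp (D.disj hne) hc' hwd
        exact hndb (hcd ▸ hre)
      have key : ∀ z ∈ A, ∀ z' ∉ A, s(z, z') ∈ D.linkAdh s(b, c) := by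
        rintro z ⟨cz, hcz, hrz⟩ z' hz'
        obtain ⟨cz', hcz'⟩ := D.covers z'
        have hnr : ¬(D.T.deleteEdges {s(b, c)}).Reachable cz' b := fun hr =>
          hz' ⟨cz', hcz', hr⟩
        have hzz : z ≠ z' := fun h => hz' (h ▸ ⟨cz, hcz, hrz⟩)
        refine ⟨G.mem_edgeSet.mpr (hadj z z' hzz), z, z', cz, cz', rfl, hcz, hcz', fun pth => ?_⟩
        refine mem_edges_of_not_reachable (fun hr => ?_) pth
        exact hnr (hr.symm.trans hrz)
      have hmaps : ∀ z ∈ ({vb}ᶜ : Set V),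
          (if z ∈ A then s(z, wd) else s(vb, z)) ∈ D.linkAdh s(b, c) := by
        intro z _
        by_cases hzA : z ∈ A
        · rw [if_pos hzA]; exact key z hzA wd hwA
        · rw [if_neg hzA]; exact key vb hvA z hzA
      have hinj : Set.InjOn (fun z => if z ∈ A then s(z, wd) else s(vb, z)) ({vb}ᶜ) := by
        intro z1 h1 z2 h2 heq
        rw [Set.mem_compl_singleton_iff] at h1 h2
        simp only at heq
        by_cases hA1 : z1 ∈ A <;> by_cases hA2 : z2 ∈ A
        · rw [if_pos hA1, if_pos hA2, Sym2.eq_iff] at heq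
          rcases heq with ⟨h, -⟩ | ⟨-, h⟩
          · exact h
          · exact absurd (h ▸ hA2) hwA
        · rw [if_pos hA1, if_neg hA2, Sym2.eq_iff] at heq
          rcases heq with ⟨h, -⟩ | ⟨-, h⟩
          · exact absurd h h1
          · exact absurd (h ▸ hvA) hwA
        · rw [if_neg hA1, if_pos hA2, Sym2.eq_iff] at heq
          rcases heq with ⟨h, -⟩ | ⟨h, -⟩
          · exact absurd h.symm h2
          · exact absurd (h.symm ▸ hvA) hwA
        · rw [if_neg hA1, if_neg hA2, Sym2.eq_iff] at heq
          rcases heq with ⟨-, h⟩ | ⟨h, h'⟩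
          · exact h
          · exact absurd h' h1
      have hle := Set.ncard_le_ncard_of_injOn _ hmaps hinj (Set.toFinite _)
      rw [ncard_compl_singleton] at hle
      have hwidth := D.le_width_link (D.T.mem_edgeSet.mpr hbc)
      omega

end WidthBounds
/-- For a finite connected simple graph `G` on `n ≥ 2` vertices, `scw(G) = n - 1` if and
only if `G` is the complete graph `K_n`. -/
theorem screewidth_eq_card_sub_one_iff_complete [Finite V] (G : SimpleGraph V)
    (hG : G.Connected) (hn : 2 ≤ Nat.card V) :
    screewidth G = Nat.card V - 1 ↔ G = ⊤ := by
  have hnt : Nontrivial V := Finite.one_lt_card_iff_nontrivial.mp (by omega)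
  constructor
  · intro hscw
    by_contra hne
    have hex : ∃ u v : V, u ≠ v ∧ ¬G.Adj u v := by
      by_contra hc
      push_neg at hc
      refine hne (le_antisymm le_top ?_)
      intro a b hab
      rw [top_adj] at hab
      exact hc a b hab
    obtain ⟨p, q, hpq, hnadj⟩ := hex
    have h3 : 3 ≤ Nat.card V := by
      classical
      obtain ⟨w⟩ := hG.preconnected p q
      obtain ⟨r, hr⟩ := w.toPath
      cases r with
      | nil => exact absurd rfl hpq
      | @cons _ m _ ha t =>
        cases t with
        | nil => exact absurd ha hnadj
        | @cons _ m2 _ ha2 t2 =>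
          have hpm : p ≠ m := G.ne_of_adj ha
          rw [Walk.cons_isPath_iff] at hr
          have hmq : m ≠ q := by
            intro h
            subst h
            rw [Walk.cons_isPath_iff] at hr
            exact hr.1.2 (Walk.end_mem_support t2)
          have hcard : ({p, m, q} : Set V).ncard = 3 := by
            rw [Set.ncard_insert_of_notMem (by simp [hpm, hpq]) (Set.toFinite _),
              Set.ncard_pair hmq]
          calc 3 = ({p, m, q} : Set V).ncard := hcard.symm
            _ ≤ Nat.card V := aux_ncard_le_natCard _
    have hnbr_p : (G.neighborSet p).ncard ≤ Nat.card V - 2 := by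
      have hsub : G.neighborSet p ⊆ ({p, q} : Set V)ᶜ := by
        intro x hx
        simp only [Set.mem_compl_iff, Set.mem_insert_iff, Set.mem_singleton_iff]
        push_neg
        exact ⟨fun h => G.irrefl (h ▸ hx), fun h => hnadj (h ▸ hx)⟩
      calc (G.neighborSet p).ncard ≤ (({p, q} : Set V)ᶜ).ncard :=
            Set.ncard_le_ncard hsub (Set.toFinite _)
        _ = Nat.card V - 2 := ncard_compl_pair hpq
    have hnbr_q : (G.neighborSet q).ncard ≤ Nat.card V - 2 := by
      have hsub : G.neighborSet q ⊆ ({p, q} : Set V)ᶜ := by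
        intro x hx
        simp only [Set.mem_compl_iff, Set.mem_insert_iff, Set.mem_singleton_iff]
        push_neg
        exact ⟨fun h => hnadj (h ▸ hx).symm, fun h => G.irrefl (h ▸ hx)⟩
      calc (G.neighborSet q).ncard ≤ (({p, q} : Set V)ᶜ).ncard :=
            Set.ncard_le_ncard hsub (Set.toFinite _)
        _ = Nat.card V - 2 := ncard_compl_pair hpq
    have hmid : (G.edgeSet ∩ {s(p, q)} : Set (Sym2 V)).ncard = 0 := by
      rw [Set.ncard_eq_zero (Set.toFinite _)]
      rw [Set.eq_empty_iff_forall_notMem]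
      rintro e ⟨heE, heq⟩
      rw [Set.mem_singleton_iff] at heq
      subst heq
      exact hnadj (G.mem_edgeSet.mp heE)
    have hw : (starDecomp G p q hpq).width ≤ Nat.card V - 2 := by
      apply starDecomp_width_le hpq hnbr_p hnbr_q
      · rw [hmid, ncard_compl_pair hpq]
        omega
      · omega
    have hsle : screewidth G ≤ Nat.card V - 2 :=
      le_trans (Nat.sInf_le ⟨starDecomp G p q hpq, rfl⟩) hw
    omega
  · intro htop
    subst htop
    obtain ⟨x, y, hxy⟩ := exists_pair_ne V
    have hadj : ∀ a b : V, a ≠ b → (⊤ : SimpleGraph V).Adj a b := fun a b hab =>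
      (top_adj a b).mpr hab
    refine le_antisymm ?_ ?_
    · refine le_trans (Nat.sInf_le ⟨starDecomp ⊤ x y hxy, rfl⟩) ?_
      apply starDecomp_width_le hxy
      · calc ((⊤ : SimpleGraph V).neighborSet x).ncard ≤ ({x}ᶜ : Set V).ncard :=
            Set.ncard_le_ncard (fun z hz => Set.mem_compl_singleton_iff.mpr
              ((⊤ : SimpleGraph V).ne_of_adj hz).symm) (Set.toFinite _)
          _ = Nat.card V - 1 := ncard_compl_singleton x
      · calc ((⊤ : SimpleGraph V).neighborSet y).ncard ≤ ({y}ᶜ : Set V).ncard :=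
            Set.ncard_le_ncard (fun z hz => Set.mem_compl_singleton_iff.mpr
              ((⊤ : SimpleGraph V).ne_of_adj hz).symm) (Set.toFinite _)
          _ = Nat.card V - 1 := ncard_compl_singleton y
      · have h1 : ((⊤ : SimpleGraph V).edgeSet ∩ {s(x, y)} : Set (Sym2 V)).ncard ≤ 1 := by
          calc ((⊤ : SimpleGraph V).edgeSet ∩ {s(x, y)} : Set (Sym2 V)).ncard
              ≤ ({s(x, y)} : Set (Sym2 V)).ncard :=
                Set.ncard_le_ncard Set.inter_subset_right (Set.toFinite _)
            _ = 1 := Set.ncard_singleton _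
        have h2 := ncard_compl_pair hxy
        omega
      · omega
    · refine le_csInf ⟨(starDecomp ⊤ x y hxy).width, starDecomp ⊤ x y hxy, rfl⟩ ?_
      rintro m ⟨D, rfl⟩
      exact width_lower_of_complete hadj hn D
end

section
/- If G is a finite connected simple graph on n vertices whose minimum degree δ(G) satisfies δ(G) ≥ ⌊n/2⌋ + 1, then scw(G) = sn(G) = n − α(G), where α(G) is the independence number of G. -/
open SimpleGraph

universe u

variable {V : Type u}

/-- A scramble on `G`: a nonempty collection of "eggs", subsets of `V` each inducing
a connected subgraph of `G`. -/
structure Scramble [Finite V] (G : SimpleGraph V) where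
  eggs : Set (Set V)
  nonempty : eggs.Nonempty
  egg_connected : ∀ E ∈ eggs, (G.induce E).Connected

namespace Scramble

variable [Finite V] {G : SimpleGraph V}

/-- A hitting set for a scramble: a set of vertices meeting every egg. -/
def IsHittingSet (S : Scramble G) (H : Set V) : Prop :=
  ∀ E ∈ S.eggs, (H ∩ E).Nonempty

/-- An egg-cut for a scramble: a set `F` of edges of `G` such that `G - F` has two
distinct connected components each containing an egg. -/
def IsEggCut (S : Scramble G) (F : Set (Sym2 V)) : Prop :=
  F ⊆ G.edgeSet ∧ ∃ E₁ ∈ S.eggs, ∃ E₂ ∈ S.eggs,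
    ∃ C₁ C₂ : (G.deleteEdges F).ConnectedComponent,
      C₁ ≠ C₂ ∧ E₁ ⊆ C₁.supp ∧ E₂ ⊆ C₂.supp

/-- The order of a scramble: the minimum of the minimum size of a hitting set and the
minimum size of an egg-cut (the latter contributing nothing when no egg-cut exists). -/
noncomputable def order (S : Scramble G) : ℕ :=
  sInf ({n | ∃ H : Set V, S.IsHittingSet H ∧ H.ncard = n} ∪
        {n | ∃ F : Set (Sym2 V), S.IsEggCut F ∧ F.ncard = n})

end Scramble

/-- The scramble number of `G`: the maximum order of a scramble on `G`. -/
noncomputable def scrambleNumber [Finite V] (G : SimpleGraph V) : ℕ :=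
  sSup {n | ∃ S : Scramble G, S.order = n}

/-- The independence number of `G`: the maximum size of a set of pairwise
nonadjacent vertices. -/
noncomputable def indepNumber [Finite V] (G : SimpleGraph V) : ℕ :=
  sSup {n | ∃ S : Set V, (∀ u ∈ S, ∀ w ∈ S, ¬ G.Adj u w) ∧ S.ncard = n}



namespace SWAux

variable {B : Type*} {T : SimpleGraph B}

/-- There is a walk from `x` to `y` avoiding the edge `e`. -/
def ERel (T : SimpleGraph B) (e : Sym2 B) (x y : B) : Prop :=
  ∃ p : T.Walk x y, e ∉ p.edges

lemma ERel.rfl {e : Sym2 B} {x : B} : ERel T e x x :=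
  ⟨Walk.nil, by simp⟩

lemma ERel.symm {e : Sym2 B} {x y : B} (h : ERel T e x y) : ERel T e y x := by
  obtain ⟨p, hp⟩ := h
  exact ⟨p.reverse, by simpa [Walk.edges_reverse] using hp⟩

lemma ERel.trans {e : Sym2 B} {x y z : B} (h : ERel T e x y) (h' : ERel T e y z) :
    ERel T e x z := by
  obtain ⟨p, hp⟩ := h; obtain ⟨q, hq⟩ := h'
  refine ⟨p.append q, ?_⟩
  rw [Walk.edges_append]
  simp [hp, hq]

lemma ERel.of_adj {e : Sym2 B} {x y : B} (h : T.Adj x y) (hne : s(x, y) ≠ e) :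
    ERel T e x y :=
  ⟨Walk.cons h Walk.nil, by
    simp only [Walk.edges_cons, Walk.edges_nil, List.mem_singleton]
    exact fun h' => hne h'.symm⟩

lemma not_erel_of_acyclic (hT : T.IsAcyclic) {b d : B} (h : T.Adj b d) :
    ¬ ERel T s(b, d) b d := by
  rw [isAcyclic_iff_forall_adj_isBridge] at hT
  have := (isBridge_iff_adj_and_forall_walk_mem_edges.mp (hT h))
  rintro ⟨p, hp⟩
  exact hp (this p)

lemma erel_dichotomy_aux {b d : B} (h : T.Adj b d) {c : B} (p : T.Walk c b) :
    ERel T s(b, d) c b ∨ ERel T s(b, d) c d := by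
  induction p with
  | nil => exact Or.inl ERel.rfl
  | @cons u v w hadj q ih =>
    by_cases he : s(u, v) = s(w, d)
    · rw [Sym2.eq_iff] at he
      rcases he with ⟨h2, -⟩ | ⟨h2, -⟩
      · exact Or.inl (by rw [h2]; exact ERel.rfl)
      · exact Or.inr (by rw [h2]; exact ERel.rfl)
    · rcases ih h with h1 | h1
      · exact Or.inl ((ERel.of_adj hadj he).trans h1)
      · exact Or.inr ((ERel.of_adj hadj he).trans h1)

lemma erel_dichotomy (hconn : T.Connected) {b d : B} (h : T.Adj b d) (c : B) :
    ERel T s(b, d) c b ∨ ERel T s(b, d) c d := by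
  obtain ⟨p⟩ := hconn.preconnected c b
  exact erel_dichotomy_aux h p

lemma forall_walk_iff_not_erel {e : Sym2 B} {x y : B} :
    (∀ p : T.Walk x y, e ∈ p.edges) ↔ ¬ ERel T e x y := by
  unfold ERel; push_neg; rfl

/-- strict decrease of sides -/
lemma erel_side_subset (hT : T.IsAcyclic) (hconn : T.Connected) {b0 d0 d1 : B}
    (h0 : T.Adj b0 d0) (h1 : T.Adj d0 d1) (hne : d1 ≠ b0) {c : B}
    (hc : ERel T s(d0, d1) c d1) : ERel T s(b0, d0) c d0 := by
  classical
  have key1 : s(d1, d0) ≠ s(b0, d0) := fun h => by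
    rcases Sym2.eq_iff.mp h with ⟨h2, -⟩ | ⟨h2, -⟩
    exacts [hne h2, h1.ne' h2]
  have key2 : s(b0, d0) ≠ s(d0, d1) := fun h => by
    rcases Sym2.eq_iff.mp h with ⟨h2, -⟩ | ⟨h2, -⟩
    exacts [h0.ne h2, hne h2.symm]
  rcases erel_dichotomy hconn h0 c with hcb | hcd
  · obtain ⟨w, hw⟩ := hcb
    by_cases he1 : s(d0, d1) ∈ w.edges
    · have hd1 : d1 ∈ w.support := Walk.snd_mem_support_of_mem_edges w he1
      refine ERel.trans ⟨w.takeUntil d1 hd1, fun hmem => hw ?_⟩ ?_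
      · exact Walk.edges_takeUntil_subset w hd1 hmem
      · exact ERel.of_adj h1.symm key1
    · exfalso
      have hcb1 : ERel T s(d0, d1) c b0 := ⟨w, he1⟩
      have hb0d0 : ERel T s(d0, d1) b0 d0 := ERel.of_adj h0 key2
      exact not_erel_of_acyclic hT h1 ((hb0d0.symm.trans hcb1.symm).trans hc)
  · exact hcd



variable {B : Type*} {T : SimpleGraph B}

/-- There is a walk from `x` to `y` avoiding the node `n`. -/
def NRel (T : SimpleGraph B) (n x y : B) : Prop :=
  ∃ p : T.Walk x y, n ∉ p.support

lemma NRel.rfl {n x : B} (h : x ≠ n) : NRel T n x x :=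
  ⟨Walk.nil, by simp [Ne.symm h]⟩

lemma NRel.symm {n x y : B} (h : NRel T n x y) : NRel T n y x := by
  obtain ⟨p, hp⟩ := h
  exact ⟨p.reverse, by simpa [Walk.support_reverse] using hp⟩

lemma NRel.trans {n x y z : B} (h : NRel T n x y) (h' : NRel T n y z) : NRel T n x z := by
  obtain ⟨p, hp⟩ := h; obtain ⟨q, hq⟩ := h'
  refine ⟨p.append q, fun hmem => ?_⟩
  rcases (Walk.mem_support_append_iff _ _).mp hmem with h2 | h2
  exacts [hp h2, hq h2]

lemma NRel.ne_start {n x y : B} (h : NRel T n x y) : x ≠ n := by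
  obtain ⟨p, hp⟩ := h
  exact fun he => hp (he ▸ p.start_mem_support)

lemma NRel.erel {n x y z : B} (h : NRel T n x y) : ERel T s(n, z) x y := by
  obtain ⟨p, hp⟩ := h
  exact ⟨p, fun hmem => hp (Walk.fst_mem_support_of_mem_edges p hmem)⟩

lemma forall_walk_iff_not_nrel {n x y : B} :
    (∀ p : T.Walk x y, n ∈ p.support) ↔ ¬ NRel T n x y := by
  unfold NRel; push_neg; rfl

/-- From any node `c ≠ r` there is a neighbour `d` of `r` such that `c` connects to
`d` avoiding the edge `s(r, d)` and avoiding `r`. -/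
lemma exists_adj_branch (hconn : T.Connected) {r c : B} (hne : c ≠ r) :
    ∃ d, T.Adj r d ∧ NRel T r d c := by
  classical
  obtain ⟨p⟩ := hconn.preconnected r c
  obtain ⟨q, hq⟩ := p.toPath
  obtain ⟨d, hadj, q', rfl⟩ := Walk.exists_eq_cons_of_ne (Ne.symm hne) q
  rw [Walk.cons_isPath_iff] at hq
  exact ⟨d, hadj, ⟨q', hq.2⟩⟩


open TreeCutDecomp

variable {V : Type u} [Finite V] {G : SimpleGraph V}

/-- The set of vertices on the `b`-side of the link `e` (to be used with `e = s(b, d)`). -/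
def sideV (D : TreeCutDecomp G) (e : Sym2 D.B) (b : D.B) : Set V :=
  {v | ∃ c, v ∈ D.bag c ∧ ERel D.T e c b}

lemma bag_unique (D : TreeCutDecomp G) {v : V} {c c' : D.B}
    (h : v ∈ D.bag c) (h' : v ∈ D.bag c') : c = c' := by
  by_contra hne
  exact Set.disjoint_left.mp (D.disj hne) h h'

lemma sideV_cover (D : TreeCutDecomp G) {b d : D.B} (hadj : D.T.Adj b d) (v : V) :
    v ∈ sideV D s(b, d) b ∨ v ∈ sideV D s(b, d) d := by
  obtain ⟨c, hc⟩ := D.covers v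
  rcases erel_dichotomy D.isTree.isConnected hadj c with h | h
  · exact Or.inl ⟨c, hc, h⟩
  · exact Or.inr ⟨c, hc, h⟩

lemma sideV_disjoint (D : TreeCutDecomp G) {b d : D.B} (hadj : D.T.Adj b d) {v : V}
    (h1 : v ∈ sideV D s(b, d) b) (h2 : v ∈ sideV D s(b, d) d) : False := by
  obtain ⟨c, hc, hr⟩ := h1; obtain ⟨c', hc', hr'⟩ := h2
  cases bag_unique D hc hc'
  exact not_erel_of_acyclic D.isTree.IsAcyclic hadj (hr.symm.trans hr')

lemma mem_linkAdh_of_sides (D : TreeCutDecomp G) {b d : D.B} (hadj : D.T.Adj b d) {x y : V}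
    (hxy : G.Adj x y) (hx : x ∈ sideV D s(b, d) b) (hy : y ∈ sideV D s(b, d) d) :
    s(x, y) ∈ D.linkAdh s(b, d) := by
  obtain ⟨c, hc, hr⟩ := hx; obtain ⟨c', hc', hr'⟩ := hy
  refine ⟨G.mem_edgeSet.mpr hxy, x, y, c, c', rfl, hc, hc', ?_⟩
  rw [forall_walk_iff_not_erel]
  intro hcc'
  exact not_erel_of_acyclic D.isTree.IsAcyclic hadj (hr.symm.trans (hcc'.trans hr'))

lemma sides_of_mem_linkAdh (D : TreeCutDecomp G) {b d : D.B} (hadj : D.T.Adj b d) {x y : V}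
    (h : s(x, y) ∈ D.linkAdh s(b, d)) :
    (x ∈ sideV D s(b, d) b ∧ y ∈ sideV D s(b, d) d) ∨
      (x ∈ sideV D s(b, d) d ∧ y ∈ sideV D s(b, d) b) := by
  obtain ⟨hedge, v, w, c, c', heq, hv, hw, hwalk⟩ := h
  rw [forall_walk_iff_not_erel] at hwalk
  have hsplit : (ERel D.T s(b, d) c b ∧ ERel D.T s(b, d) c' d) ∨
      (ERel D.T s(b, d) c d ∧ ERel D.T s(b, d) c' b) := by
    rcases erel_dichotomy D.isTree.isConnected hadj c with h1 | h1 <;>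
      rcases erel_dichotomy D.isTree.isConnected hadj c' with h2 | h2
    · exact absurd (h1.trans h2.symm) hwalk
    · exact Or.inl ⟨h1, h2⟩
    · exact Or.inr ⟨h1, h2⟩
    · exact absurd (h1.trans h2.symm) hwalk
  rcases Sym2.eq_iff.mp heq with ⟨hx, hy⟩ | ⟨hx, hy⟩
  · subst hx; subst hy
    rcases hsplit with ⟨h1, h2⟩ | ⟨h1, h2⟩
    · exact Or.inl ⟨⟨c, hv, h1⟩, ⟨c', hw, h2⟩⟩
    · exact Or.inr ⟨⟨c, hv, h1⟩, ⟨c', hw, h2⟩⟩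
  · subst hx; subst hy
    rcases hsplit with ⟨h1, h2⟩ | ⟨h1, h2⟩
    · exact Or.inr ⟨⟨c', hw, h2⟩, ⟨c, hv, h1⟩⟩
    · exact Or.inl ⟨⟨c', hw, h2⟩, ⟨c, hv, h1⟩⟩

lemma not_mem_linkAdh_same_d (D : TreeCutDecomp G) {b d : D.B} (hadj : D.T.Adj b d) {x y : V}
    (hx : x ∈ sideV D s(b, d) d) (hy : y ∈ sideV D s(b, d) d) :
    s(x, y) ∉ D.linkAdh s(b, d) := by
  intro h
  rcases sides_of_mem_linkAdh D hadj h with ⟨h1, h2⟩ | ⟨h1, h2⟩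
  exacts [sideV_disjoint D hadj h1 hx, sideV_disjoint D hadj h2 hy]

lemma not_mem_linkAdh_same_b (D : TreeCutDecomp G) {b d : D.B} (hadj : D.T.Adj b d) {x y : V}
    (hx : x ∈ sideV D s(b, d) b) (hy : y ∈ sideV D s(b, d) b) :
    s(x, y) ∉ D.linkAdh s(b, d) := by
  intro h
  rcases sides_of_mem_linkAdh D hadj h with ⟨h1, h2⟩ | ⟨h1, h2⟩
  exacts [sideV_disjoint D hadj hy h2, sideV_disjoint D hadj hx h1]

lemma side_pres (D : TreeCutDecomp G) {b d : D.B} (hadj : D.T.Adj b d) {x y : V}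
    (h : (G.deleteEdges (D.linkAdh s(b, d))).Reachable x y)
    (hx : x ∈ sideV D s(b, d) d) : y ∈ sideV D s(b, d) d := by
  obtain ⟨p⟩ := h
  induction p with
  | nil => exact hx
  | @cons u v w hadj' q ih =>
    rw [deleteEdges_adj] at hadj'
    apply ih
    rcases sideV_cover D hadj v with hv | hv
    · exact absurd ((Sym2.eq_swap (a := v)) ▸ mem_linkAdh_of_sides D hadj hadj'.1.symm hv hx)
        hadj'.2
    · exact hv

lemma reach_in_egg {F : Set (Sym2 V)} {E : Set V}
    (hno : ∀ x y : V, x ∈ E → y ∈ E → G.Adj x y → s(x, y) ∉ F)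
    {a c : E} (p : (G.induce E).Walk a c) : (G.deleteEdges F).Reachable a.1 c.1 := by
  induction p with
  | nil => exact Reachable.refl _
  | @cons u v w h q ih =>
    have hadj : G.Adj u.1 v.1 := h
    have hd : (G.deleteEdges F).Adj u.1 v.1 := by
      rw [deleteEdges_adj]
      exact ⟨hadj, hno _ _ u.2 v.2 hadj⟩
    exact (hd.reachable).trans ih

lemma egg_nonempty {E : Set V} (hc : (G.induce E).Connected) : E.Nonempty := by
  obtain ⟨⟨x, hx⟩⟩ := hc.nonempty
  exact ⟨x, hx⟩

lemma isEggCut_linkAdh (D : TreeCutDecomp G) (S : Scramble G) {b d : D.B}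
    (hadj : D.T.Adj b d) {E1 E2 : Set V} (hE1 : E1 ∈ S.eggs) (hE2 : E2 ∈ S.eggs)
    (h1 : E1 ⊆ sideV D s(b, d) d) (h2 : E2 ⊆ sideV D s(b, d) b) :
    S.IsEggCut (D.linkAdh s(b, d)) := by
  classical
  set F := D.linkAdh s(b, d) with hF
  obtain ⟨x1, hx1⟩ := egg_nonempty (S.egg_connected E1 hE1)
  obtain ⟨x2, hx2⟩ := egg_nonempty (S.egg_connected E2 hE2)
  have hno1 : ∀ x y : V, x ∈ E1 → y ∈ E1 → G.Adj x y → s(x, y) ∉ F :=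
    fun x y hx hy _ => not_mem_linkAdh_same_d D hadj (h1 hx) (h1 hy)
  have hno2 : ∀ x y : V, x ∈ E2 → y ∈ E2 → G.Adj x y → s(x, y) ∉ F :=
    fun x y hx hy _ => not_mem_linkAdh_same_b D hadj (h2 hx) (h2 hy)
  refine ⟨fun e he => he.1, E1, hE1, E2, hE2,
    (G.deleteEdges F).connectedComponentMk x1, (G.deleteEdges F).connectedComponentMk x2,
    ?_, ?_, ?_⟩
  · intro heq
    have hreach : (G.deleteEdges F).Reachable x1 x2 := (ConnectedComponent.eq).mp heq
    exact sideV_disjoint D hadj (h2 hx2) (side_pres D hadj hreach (h1 hx1))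
  · intro y hy
    rw [ConnectedComponent.mem_supp_iff]
    apply ConnectedComponent.sound
    obtain ⟨p⟩ := (S.egg_connected E1 hE1).preconnected ⟨y, hy⟩ ⟨x1, hx1⟩
    exact reach_in_egg hno1 p
  · intro y hy
    rw [ConnectedComponent.mem_supp_iff]
    apply ConnectedComponent.sound
    obtain ⟨p⟩ := (S.egg_connected E2 hE2).preconnected ⟨y, hy⟩ ⟨x2, hx2⟩
    exact reach_in_egg hno2 p

lemma width_bddAbove (D : TreeCutDecomp G) :
    BddAbove ({n | ∃ l ∈ D.T.edgeSet, n = (D.linkAdh l).ncard} ∪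
      {n | ∃ b : D.B, n = (D.bag b).ncard + (D.nodeAdh b).ncard}) := by
  haveI := D.finB
  apply Set.Finite.bddAbove
  apply Set.Finite.union
  · apply Set.Finite.subset (Set.finite_range fun l : Sym2 D.B => (D.linkAdh l).ncard)
    rintro n ⟨l, -, rfl⟩; exact ⟨l, rfl⟩
  · apply Set.Finite.subset
      (Set.finite_range fun b : D.B => (D.bag b).ncard + (D.nodeAdh b).ncard)
    rintro n ⟨b, rfl⟩; exact ⟨b, rfl⟩

lemma link_le_width (D : TreeCutDecomp G) {l : Sym2 D.B} (hl : l ∈ D.T.edgeSet) :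
    (D.linkAdh l).ncard ≤ D.width :=
  le_csSup (width_bddAbove D) (Set.mem_union_left _ ⟨l, hl, rfl⟩)

lemma node_le_width (D : TreeCutDecomp G) (b : D.B) :
    (D.bag b).ncard + (D.nodeAdh b).ncard ≤ D.width :=
  le_csSup (width_bddAbove D) (Set.mem_union_right _ ⟨b, rfl⟩)

lemma order_le_hitting (S : Scramble G) {H : Set V} (h : S.IsHittingSet H) :
    S.order ≤ H.ncard :=
  Nat.sInf_le (Set.mem_union_left _ ⟨H, h, rfl⟩)

lemma order_le_eggcut (S : Scramble G) {F : Set (Sym2 V)} (h : S.IsEggCut F) :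
    S.order ≤ F.ncard :=
  Nat.sInf_le (Set.mem_union_right _ ⟨F, h, rfl⟩)

lemma exists_cross_aux {E : Set V} (P : V → Prop)
    {a c : E} (p : (G.induce E).Walk a c) (hP0 : P a.1) (hP1 : ¬ P c.1) :
    ∃ x y, x ∈ E ∧ y ∈ E ∧ G.Adj x y ∧ P x ∧ ¬ P y := by
  classical
  induction p with
  | nil => exact absurd hP0 hP1
  | @cons u v w h q ih =>
    have hadj : G.Adj u.1 v.1 := h
    by_cases hPv : P v.1
    · exact ih hPv hP1
    · exact ⟨u.1, v.1, u.2, v.2, hadj, hP0, hPv⟩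

lemma exists_cross {E : Set V} (hc : (G.induce E).Connected) (P : V → Prop)
    {x0 v1 : V} (hx0 : x0 ∈ E) (hv1 : v1 ∈ E) (hP0 : P x0) (hP1 : ¬ P v1) :
    ∃ x y, x ∈ E ∧ y ∈ E ∧ G.Adj x y ∧ P x ∧ ¬ P y := by
  obtain ⟨p⟩ := hc.preconnected ⟨x0, hx0⟩ ⟨v1, hv1⟩
  exact exists_cross_aux P p hP0 hP1

theorem order_le_width (S : Scramble G) (D : TreeCutDecomp G) : S.order ≤ D.width := by
  classical
  haveI := D.finB
  by_cases hcase : ∃ b d : D.B, D.T.Adj b d ∧ (∃ E1 ∈ S.eggs, E1 ⊆ sideV D s(b, d) d) ∧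
      (∃ E2 ∈ S.eggs, E2 ⊆ sideV D s(b, d) b)
  · obtain ⟨b, d, hadj, ⟨E1, hE1, h1⟩, ⟨E2, hE2, h2⟩⟩ := hcase
    calc S.order ≤ (D.linkAdh s(b, d)).ncard :=
          order_le_eggcut S (isEggCut_linkAdh D S hadj hE1 hE2 h1 h2)
      _ ≤ D.width := link_le_width D (D.T.mem_edgeSet.mpr hadj)
  · have hno : ∀ b d : D.B, D.T.Adj b d → (∃ E1 ∈ S.eggs, E1 ⊆ sideV D s(b, d) d) →
        (∃ E2 ∈ S.eggs, E2 ⊆ sideV D s(b, d) b) → False :=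
      fun b d h h1 h2 => hcase ⟨b, d, h, h1, h2⟩
    have hsink : ∃ r : D.B, ∀ d, D.T.Adj r d → ∀ E ∈ S.eggs, ¬ E ⊆ sideV D s(r, d) d := by
      by_cases hP : ∃ p : D.B × D.B,
          (D.T.Adj p.1 p.2 ∧ ∃ E ∈ S.eggs, E ⊆ sideV D s(p.1, p.2) p.2)
      · have hMne : {n | ∃ p : D.B × D.B,
            (D.T.Adj p.1 p.2 ∧ ∃ E ∈ S.eggs, E ⊆ sideV D s(p.1, p.2) p.2) ∧
            n = {c | ERel D.T s(p.1, p.2) c p.2}.ncard}.Nonempty := by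
          obtain ⟨p, hp⟩ := hP; exact ⟨_, p, hp, rfl⟩
        obtain ⟨⟨b0, d0⟩, hbad0, hmeq⟩ := Nat.sInf_mem hMne
        dsimp only at hbad0 hmeq
        refine ⟨d0, fun d1 hadj1 E hE hsub => ?_⟩
        by_cases hd1 : d1 = b0
        · subst hd1
          rw [Sym2.eq_swap] at hsub
          exact hno d1 d0 hbad0.1 hbad0.2 ⟨E, hE, hsub⟩
        · have hssub : {c | ERel D.T s(d0, d1) c d1} ⊂ {c | ERel D.T s(b0, d0) c d0} := by
            constructor
            · intro c hcm
              exact erel_side_subset D.isTree.IsAcyclic D.isTree.isConnected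
                hbad0.1 hadj1 hd1 hcm
            · intro hsup
              exact not_erel_of_acyclic D.isTree.IsAcyclic hadj1 (hsup (ERel.rfl))
          have hlt : {c | ERel D.T s(d0, d1) c d1}.ncard <
              {c | ERel D.T s(b0, d0) c d0}.ncard := Set.ncard_lt_ncard hssub (Set.toFinite _)
          have := Nat.sInf_le (s := {n | ∃ p : D.B × D.B,
            (D.T.Adj p.1 p.2 ∧ ∃ E ∈ S.eggs, E ⊆ sideV D s(p.1, p.2) p.2) ∧
            n = {c | ERel D.T s(p.1, p.2) c p.2}.ncard})
            ⟨(d0, d1), ⟨hadj1, E, hE, hsub⟩, rfl⟩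
          dsimp only at this
          omega
      · haveI := D.isTree.isConnected.nonempty
        push_neg at hP
        exact ⟨Classical.arbitrary _, fun d hadj E hE hsub => (hP (_, d) hadj) E hE hsub⟩
    obtain ⟨r, hr⟩ := hsink
    set H : Set V := D.bag r ∪ (fun e : Sym2 V => e.out.1) '' (D.nodeAdh r) with hH
    have hhit : S.IsHittingSet H := by
      intro E hE
      by_cases hEbag : ∃ v, v ∈ E ∧ v ∈ D.bag r
      · obtain ⟨v, hv1, hv2⟩ := hEbag; exact ⟨v, Or.inl hv2, hv1⟩
      · push_neg at hEbag
        obtain ⟨x0, hx0⟩ := egg_nonempty (S.egg_connected E hE)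
        obtain ⟨c0, hc0⟩ := D.covers x0
        have hc0r : c0 ≠ r := fun h => hEbag x0 hx0 (h ▸ hc0)
        by_cases hall : ∀ v ∈ E, ∃ c, v ∈ D.bag c ∧ NRel D.T r c c0
        · exfalso
          obtain ⟨dstar, hadj, hnr⟩ := exists_adj_branch D.isTree.isConnected hc0r
          have hsub : E ⊆ sideV D s(r, dstar) dstar := by
            intro v hv
            rcases sideV_cover D hadj v with hvb | hvd
            · exfalso
              obtain ⟨c, hc, hrel⟩ := hvb
              obtain ⟨c₂, hc₂, hnrel⟩ := hall v hv
              cases bag_unique D hc hc₂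
              exact not_erel_of_acyclic D.isTree.IsAcyclic hadj
                (hrel.symm.trans ((hnrel.erel (z := dstar)).trans (hnr.erel (z := dstar)).symm))
            · exact hvd
          exact hr dstar hadj E hE hsub
        · push_neg at hall
          obtain ⟨v1, hv1, hv1p⟩ := hall
          obtain ⟨x, y, hxE, hyE, hxy, ⟨c, hc, hcrel⟩, hyP⟩ :=
            exists_cross (S.egg_connected E hE)
              (fun v => ∃ c, v ∈ D.bag c ∧ NRel D.T r c c0) hx0 hv1
              ⟨c0, hc0, NRel.rfl hc0r⟩ (fun hh => by obtain ⟨cc, hh1, hh2⟩ := hh; exact hv1p cc hh1 hh2)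
          have hmem : s(x, y) ∈ D.nodeAdh r := by
            obtain ⟨c', hc'⟩ := D.covers y
            refine ⟨G.mem_edgeSet.mpr hxy, x, y, c, c', rfl, hc, hc', hcrel.ne_start, ?_, ?_⟩
            · exact fun h => hEbag y hyE (h ▸ hc')
            · rw [forall_walk_iff_not_nrel]
              exact fun hnn => hyP ⟨c', hc', hnn.symm.trans hcrel⟩
          refine ⟨(s(x, y)).out.1, Or.inr ⟨s(x, y), hmem, rfl⟩, ?_⟩
          have hout := Sym2.out_fst_mem s(x, y)
          rw [Sym2.mem_iff] at hout
          rcases hout with h | h <;> rw [h] <;> assumption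
    have hcard : H.ncard ≤ (D.bag r).ncard + (D.nodeAdh r).ncard := by
      refine le_trans (Set.ncard_union_le _ _) ?_
      gcongr
      exact Set.ncard_image_le (Set.toFinite _)
    calc S.order ≤ H.ncard := order_le_hitting S hhit
      _ ≤ (D.bag r).ncard + (D.nodeAdh r).ncard := hcard
      _ ≤ D.width := node_le_width D r


/-! ### The star tree -/

/-- The star graph on `Option ι` with centre `none`. -/
def star (ι : Type) : SimpleGraph (Option ι) where
  Adj x y := x ≠ y ∧ (x = none ∨ y = none)
  symm := ⟨by rintro x y ⟨h1, h2⟩; exact ⟨h1.symm, h2.symm⟩⟩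
  loopless := ⟨fun x h => h.1 rfl⟩

lemma star_reach_none {ι : Type} (x : Option ι) : (star ι).Reachable x none := by
  cases x with
  | none => exact Reachable.refl _
  | some a => exact SimpleGraph.Adj.reachable ⟨Option.some_ne_none a, Or.inr rfl⟩

lemma star_not_reach {ι : Type} (a : ι) :
    ¬ (star ι \ SimpleGraph.fromEdgeSet {s(some a, none)}).Reachable (some a) none := by
  rintro ⟨p⟩
  cases p with
  | cons h q =>
    rename_i z
    rw [SimpleGraph.sdiff_adj, SimpleGraph.fromEdgeSet_adj] at h
    have hz : z = none := by
      rcases h.1.2 with h2 | h2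
      · exact absurd h2 (Option.some_ne_none a)
      · exact h2
    subst hz
    exact h.2 ⟨rfl, Option.some_ne_none a⟩

lemma star_isTree (ι : Type) : (star ι).IsTree := by
  constructor
  · constructor
    intro x y
    exact (star_reach_none x).trans (star_reach_none y).symm
  · rw [SimpleGraph.isAcyclic_iff_forall_adj_isBridge]
    intro v w hadj
    rw [SimpleGraph.isBridge_iff]
    match v, w with
    | none, none => exact absurd rfl hadj.1
    | some a, none => exact star_not_reach a
    | none, some b =>
      rw [Sym2.eq_swap]
      intro hr
      exact star_not_reach b hr.symm
    | some a, some b =>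
      rcases hadj.2 with h | h
      · exact absurd h (Option.some_ne_none a)
      · exact absurd h (Option.some_ne_none b)

/-- A walk to the centre of the star. -/
def star.toNone {ι : Type} (x : Option ι) : (star ι).Walk x none :=
  match x with
  | none => SimpleGraph.Walk.nil
  | some a => SimpleGraph.Walk.cons ⟨Option.some_ne_none a, Or.inr rfl⟩ SimpleGraph.Walk.nil

lemma star.edges_toNone {ι : Type} (x : Option ι) {e : Sym2 (Option ι)}
    (he : e ∈ (star.toNone x).edges) : e = s(x, none) := by
  cases x with
  | none => simp [star.toNone] at he
  | some a =>
    have hh : (star.toNone (some a)).edges = [s(some a, none)] := rfl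
    rw [hh] at he; simpa using he

lemma star.support_toNone {ι : Type} (x : Option ι) {z : Option ι}
    (hz : z ∈ (star.toNone x).support) : z = x ∨ z = none := by
  cases x with
  | none => simp [star.toNone] at hz; exact Or.inr hz
  | some a =>
    have hh : (star.toNone (some a)).support = [some a, none] := rfl
    rw [hh] at hz; simpa using hz

/-! ### The star decomposition -/

variable {V : Type u} [Finite V] {G : SimpleGraph V}

/-- The star tree-cut decomposition associated with a set `A`. -/
noncomputable def starDecomp (G : SimpleGraph V) (A : Set V) {k : ℕ} (e : A ≃ Fin k) :
    TreeCutDecomp G where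
  B := Option (Fin k)
  finB := inferInstance
  T := star (Fin k)
  isTree := star_isTree _
  bag := fun o => o.elim Aᶜ (fun i => {(e.symm i).1})
  disj := by
    rintro (_ | i) (_ | j) hne
    · exact absurd rfl hne
    · simp only [Option.elim]
      rw [Set.disjoint_singleton_right]
      simp only [Set.mem_compl_iff, not_not]
      exact (e.symm j).2
    · simp only [Option.elim]
      rw [Set.disjoint_singleton_left]
      simp only [Set.mem_compl_iff, not_not]
      exact (e.symm i).2
    · simp only [Option.elim]
      rw [Set.disjoint_singleton_right, Set.mem_singleton_iff]
      intro h
      exact hne (by rw [show i = j from (by simpa using e.symm.injective (Subtype.ext h) : j = i).symm])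
  covers := fun v => by
    classical
    by_cases h : v ∈ A
    · exact ⟨some (e ⟨v, h⟩), by simp⟩
    · exact ⟨none, h⟩

section starD

variable {A : Set V} {k : ℕ} (e : A ≃ Fin k)
  (hind : ∀ u ∈ A, ∀ w ∈ A, ¬ G.Adj u w)

include hind in
lemma starDecomp_nodeAdh_none : (starDecomp G A e).nodeAdh none = ∅ := by
  ext ed
  simp only [Set.mem_empty_iff_false, iff_false]
  rintro ⟨hedge, v, w, b, d, heq, hv, hw, hb, hd, -⟩
  obtain ⟨i, rfl⟩ := Option.ne_none_iff_exists'.mp hb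
  obtain ⟨j, rfl⟩ := Option.ne_none_iff_exists'.mp hd
  have hv' : v = (e.symm i).1 := hv
  have hw' : w = (e.symm j).1 := hw
  have hadj : G.Adj v w := G.mem_edgeSet.mp (heq ▸ hedge)
  exact hind v (hv' ▸ (e.symm i).2) w (hw' ▸ (e.symm j).2) hadj

lemma starDecomp_nodeAdh_some (i : Fin k) : (starDecomp G A e).nodeAdh (some i) = ∅ := by
  ext ed
  simp only [Set.mem_empty_iff_false, iff_false]
  rintro ⟨-, v, w, b, d, -, -, -, hb, hd, hwalk⟩
  have hmem := hwalk ((star.toNone b).append (star.toNone d).reverse)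
  erw [SimpleGraph.Walk.mem_support_append_iff] at hmem
  rcases hmem with h | h
  · rcases star.support_toNone b h with h2 | h2
    exacts [hb h2.symm, Option.some_ne_none i h2]
  · erw [SimpleGraph.Walk.support_reverse, List.mem_reverse] at h
    rcases star.support_toNone d h with h2 | h2
    exacts [hd h2.symm, Option.some_ne_none i h2]

lemma starDecomp_linkAdh_subset (i : Fin k) :
    (starDecomp G A e).linkAdh s(some i, none) ⊆
      (fun w => s((e.symm i).1, w)) '' {w | G.Adj (e.symm i).1 w} := by
  rintro ed ⟨hedge, v, w, b, d, heq, hv, hw, hwalk⟩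
  have hbd : b = some i ∨ d = some i := by
    by_contra hc
    have hc1 : b ≠ some i := fun h => hc (Or.inl h)
    have hc2 : d ≠ some i := fun h => hc (Or.inr h)
    have hmem := hwalk ((star.toNone b).append (star.toNone d).reverse)
    erw [SimpleGraph.Walk.edges_append] at hmem
    rcases List.mem_append.mp hmem with h | h
    · have h3 := star.edges_toNone b h
      rcases Sym2.eq_iff.mp h3 with ⟨h1, -⟩ | ⟨h1, -⟩
      · exact hc1 h1.symm
      · exact Option.some_ne_none i h1
    · erw [SimpleGraph.Walk.edges_reverse, List.mem_reverse] at h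
      have h3 := star.edges_toNone d h
      rcases Sym2.eq_iff.mp h3 with ⟨h1, -⟩ | ⟨h1, -⟩
      · exact hc2 h1.symm
      · exact Option.some_ne_none i h1
  have hadj : G.Adj v w := G.mem_edgeSet.mp (heq ▸ hedge)
  rcases hbd with rfl | rfl
  · have hv' : v = (e.symm i).1 := hv
    exact ⟨w, hv' ▸ hadj, by rw [heq, hv']⟩
  · have hw' : w = (e.symm i).1 := hw
    refine ⟨v, hw' ▸ hadj.symm, ?_⟩
    rw [heq, hw', Sym2.eq_swap]

include hind in
lemma starDecomp_width (h1 : 1 ≤ Aᶜ.ncard)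
    (hbound : ∀ i : Fin k, ({w | G.Adj (e.symm i).1 w}).ncard ≤ Aᶜ.ncard) :
    (starDecomp G A e).width = Aᶜ.ncard := by
  have hmem : Aᶜ.ncard ∈ ({n | ∃ l ∈ (starDecomp G A e).T.edgeSet,
        n = ((starDecomp G A e).linkAdh l).ncard} ∪
      {n | ∃ b : (starDecomp G A e).B,
        n = ((starDecomp G A e).bag b).ncard + ((starDecomp G A e).nodeAdh b).ncard}) := by
    refine Set.mem_union_right _ ⟨none, ?_⟩
    rw [starDecomp_nodeAdh_none e hind]
    simp only [Set.ncard_empty, add_zero]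
    rfl
  refine le_antisymm (csSup_le ⟨_, hmem⟩ ?_) (le_csSup (width_bddAbove _) hmem)
  rintro n (⟨l, hl, rfl⟩ | ⟨b, rfl⟩)
  · induction l using Sym2.ind with
  | _ x y =>
    have hadj : (star (Fin k)).Adj x y := (starDecomp G A e).T.mem_edgeSet.mp hl
    have key : ∀ j : Fin k, ((starDecomp G A e).linkAdh s(some j, none)).ncard ≤ Aᶜ.ncard :=
      fun j => le_trans (le_trans
        (Set.ncard_le_ncard (starDecomp_linkAdh_subset e j) (Set.toFinite _))
        (Set.ncard_image_le (Set.toFinite _))) (hbound j)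
    match x, y with
    | none, none => exact absurd rfl hadj.1
    | some j, none => exact key j
    | none, some j => erw [Sym2.eq_swap]; exact key j
    | some j, some j' =>
      rcases hadj.2 with h | h
      · exact absurd h (Option.some_ne_none j)
      · exact absurd h (Option.some_ne_none j')
  · match b with
    | none =>
      rw [starDecomp_nodeAdh_none e hind]
      simp only [Set.ncard_empty, add_zero]
      exact le_of_eq rfl
    | some i =>
      rw [starDecomp_nodeAdh_some e i]
      have : ((starDecomp G A e).bag (some i)).ncard = 1 := Set.ncard_singleton _
      rw [this]
      simpa using h1

end starD
/-! ### The edge scramble -/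

lemma pair_connected {u w : V} (h : G.Adj u w) : (G.induce {u, w}).Connected := by
  rw [SimpleGraph.connected_iff]
  constructor
  · intro x y
    by_cases hxy : x = y
    · rw [hxy]
    · have hx : x.1 = u ∨ x.1 = w := by
        have := x.2; rwa [Set.mem_insert_iff, Set.mem_singleton_iff] at this
      have hy : y.1 = u ∨ y.1 = w := by
        have := y.2; rwa [Set.mem_insert_iff, Set.mem_singleton_iff] at this
      have hadj : G.Adj x.1 y.1 := by
        rcases hx with hx | hx <;> rcases hy with hy | hy
        · exact absurd (Subtype.ext (hx.trans hy.symm)) hxy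
        · rw [hx, hy]; exact h
        · rw [hx, hy]; exact h.symm
        · exact absurd (Subtype.ext (hx.trans hy.symm)) hxy
      exact SimpleGraph.Adj.reachable (G := G.induce {u, w}) hadj
  · exact ⟨⟨u, Or.inl rfl⟩⟩

/-- The scramble whose eggs are the edges of `G`. -/
def edgeScramble (G : SimpleGraph V) (h : ∃ u w, G.Adj u w) : Scramble G where
  eggs := {E | ∃ u w, G.Adj u w ∧ E = {u, w}}
  nonempty := ⟨{h.choose, h.choose_spec.choose}, h.choose, h.choose_spec.choose,
    h.choose_spec.choose_spec, rfl⟩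
  egg_connected := by rintro E ⟨u, w, hadj, rfl⟩; exact pair_connected hadj

lemma order_le_card (S : Scramble G) : S.order ≤ Nat.card V := by
  have huniv : S.IsHittingSet Set.univ := by
    intro E hE
    obtain ⟨x, hx⟩ := egg_nonempty (S.egg_connected E hE)
    exact ⟨x, Set.mem_univ x, hx⟩
  calc S.order ≤ (Set.univ : Set V).ncard := order_le_hitting S huniv
    _ = Nat.card V := Set.ncard_univ V

/-! ### Counting crossing edges -/

lemma cut_count {m : ℕ} (hδ : ∀ v : V, m + 1 ≤ ({w | G.Adj v w}).ncard)
    {A : Set V} {F : Set (Sym2 V)} (ha2 : 2 ≤ A.ncard) (ham : A.ncard ≤ m)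
    (hF : ∀ x y, x ∈ A → y ∉ A → G.Adj x y → s(x, y) ∈ F) : 2 * m ≤ F.ncard := by
  classical
  haveI : Fintype V := Fintype.ofFinite V
  set a := A.ncard with hadef
  have hpt : ∀ v ∈ A, m + 2 ≤ ({w | G.Adj v w} \ A).ncard + a := by
    intro v hv
    have h1 : ({w | G.Adj v w} ∩ A).ncard + ({w | G.Adj v w} \ A).ncard
        = ({w | G.Adj v w}).ncard := Set.ncard_inter_add_ncard_diff_eq_ncard _ _ (Set.toFinite _)
    have h2 : ({w | G.Adj v w} ∩ A).ncard ≤ (A \ {v}).ncard := by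
      apply Set.ncard_le_ncard _ (Set.toFinite _)
      rintro w ⟨hw1, hw2⟩
      refine ⟨hw2, fun hh => ?_⟩
      rw [Set.mem_singleton_iff] at hh
      exact G.loopless.irrefl v (hh ▸ hw1)
    have h3 : (A \ {v}).ncard + 1 = a := Set.ncard_diff_singleton_add_one hv (Set.toFinite _)
    have h4 := hδ v
    omega
  set AF := A.toFinset with hAF
  have hbiU : (AF.biUnion fun v => ({w | G.Adj v w} \ A).toFinset.image fun w => s(v, w))
      ⊆ F.toFinset := by
    intro ed hed
    rw [Finset.mem_biUnion] at hed
    obtain ⟨v, hv, hed⟩ := hed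
    rw [Finset.mem_image] at hed
    obtain ⟨w, hw, rfl⟩ := hed
    rw [Set.mem_toFinset] at hw ⊢
    rw [hAF, Set.mem_toFinset] at hv
    exact hF v w hv hw.2 hw.1
  have hdisj : ∀ v1 ∈ AF, ∀ v2 ∈ AF, v1 ≠ v2 →
      Disjoint (({w | G.Adj v1 w} \ A).toFinset.image fun w => s(v1, w))
        (({w | G.Adj v2 w} \ A).toFinset.image fun w => s(v2, w)) := by
    intro v1 h1 v2 h2 hne
    rw [Finset.disjoint_left]
    intro ed hm1 hm2
    rw [Finset.mem_image] at hm1 hm2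
    obtain ⟨w1, hw1, he1⟩ := hm1; obtain ⟨w2, hw2, he2⟩ := hm2
    rw [Set.mem_toFinset] at hw1 hw2
    rw [← he2] at he1
    rcases Sym2.eq_iff.mp he1 with ⟨hx, -⟩ | ⟨hx, -⟩
    · exact hne hx
    · rw [hAF, Set.mem_toFinset] at h1
      exact hw2.2 (hx ▸ h1)
  have hcard : ∑ v ∈ AF, (({w | G.Adj v w} \ A).toFinset.image fun w => s(v, w)).card
      ≤ F.toFinset.card := by
    rw [← Finset.card_biUnion hdisj]
    exact Finset.card_le_card hbiU
  have himg : ∀ v ∈ AF, (({w | G.Adj v w} \ A).toFinset.image fun w => s(v, w)).card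
      = ({w | G.Adj v w} \ A).toFinset.card := by
    intro v hv
    apply Finset.card_image_of_injOn
    intro w1 h1 w2 h2 heq
    rcases Sym2.eq_iff.mp heq with ⟨-, h⟩ | ⟨-, hy⟩
    · exact h
    · exfalso
      rw [Finset.mem_coe, Set.mem_toFinset] at h1
      rw [hAF, Set.mem_toFinset] at hv
      exact h1.2 (hy ▸ hv)
  have hterm : ∀ v ∈ AF, m + 2 - a ≤ ({w | G.Adj v w} \ A).toFinset.card := by
    intro v hv
    rw [hAF, Set.mem_toFinset] at hv
    have := hpt v hv
    rw [Set.ncard_eq_toFinset_card'] at this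
    omega
  have hAFcard : AF.card = a := by rw [hAF, hadef]; exact (Set.ncard_eq_toFinset_card' A).symm
  obtain ⟨a', ha'⟩ : ∃ a', a = a' + 2 := ⟨a - 2, by omega⟩
  obtain ⟨r, hr⟩ : ∃ r, m = a' + 2 + r := ⟨m - (a' + 2), by omega⟩
  have hprod : 2 * m ≤ a * (m + 2 - a) := by
    have h5 : m + 2 - a = r + 2 := by omega
    rw [h5, ha', hr]
    have h6 : (a' + 2) * (r + 2) = a' * r + 2 * a' + 2 * r + 4 := by ring
    omega
  have hF' : F.ncard = F.toFinset.card := Set.ncard_eq_toFinset_card' F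
  have hsum2 : ∑ _v ∈ AF, (m + 2 - a) ≤ F.toFinset.card := by
    calc ∑ _v ∈ AF, (m + 2 - a) ≤ ∑ v ∈ AF, ({w | G.Adj v w} \ A).toFinset.card :=
          Finset.sum_le_sum hterm
      _ = ∑ v ∈ AF, (({w | G.Adj v w} \ A).toFinset.image fun w => s(v, w)).card :=
          (Finset.sum_congr rfl fun v hv => (himg v hv).symm)
      _ ≤ F.toFinset.card := hcard
  rw [Finset.sum_const, smul_eq_mul, hAFcard] at hsum2
  calc 2 * m ≤ a * (m + 2 - a) := hprod
    _ ≤ F.toFinset.card := hsum2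
    _ = F.ncard := hF'.symm

lemma eggCut_card {m : ℕ} (hδ : ∀ v : V, m + 1 ≤ ({w | G.Adj v w}).ncard)
    (hm : Nat.card V ≤ 2 * m + 1)
    {F : Set (Sym2 V)} {u1 w1 u2 w2 : V} (h1 : G.Adj u1 w1) (h2 : G.Adj u2 w2)
    {C1 C2 : (G.deleteEdges F).ConnectedComponent} (hne : C1 ≠ C2)
    (hs1 : ({u1, w1} : Set V) ⊆ C1.supp) (hs2 : ({u2, w2} : Set V) ⊆ C2.supp) :
    2 * m ≤ F.ncard := by
  classical
  have hbdry : ∀ (C : (G.deleteEdges F).ConnectedComponent) (x y : V),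
      x ∈ C.supp → y ∉ C.supp → G.Adj x y → s(x, y) ∈ F := by
    intro C x y hx hy hadj
    by_contra hmem
    apply hy
    rw [SimpleGraph.ConnectedComponent.mem_supp_iff] at hx ⊢
    rw [← hx, SimpleGraph.ConnectedComponent.eq]
    have hadj' : (G.deleteEdges F).Adj x y := by
      rw [SimpleGraph.deleteEdges_adj]; exact ⟨hadj, hmem⟩
    exact hadj'.symm.reachable
  have hdisj : Disjoint C1.supp C2.supp := by
    rw [Set.disjoint_left]
    intro v hv1 hv2
    rw [SimpleGraph.ConnectedComponent.mem_supp_iff] at hv1 hv2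
    exact hne (by rw [← hv1, hv2])
  have hsum : C1.supp.ncard + C2.supp.ncard ≤ Nat.card V := by
    rw [← Set.ncard_union_eq hdisj (Set.toFinite _) (Set.toFinite _), ← Set.ncard_univ V]
    exact Set.ncard_le_ncard (Set.subset_univ _) (Set.toFinite _)
  have hc1 : 2 ≤ C1.supp.ncard := by
    rw [← Set.ncard_pair h1.ne]
    exact Set.ncard_le_ncard hs1 (Set.toFinite _)
  have hc2 : 2 ≤ C2.supp.ncard := by
    rw [← Set.ncard_pair h2.ne]
    exact Set.ncard_le_ncard hs2 (Set.toFinite _)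
  rcases le_total C1.supp.ncard C2.supp.ncard with hle | hle
  · exact cut_count hδ hc1 (by omega) (fun x y hx hy => hbdry C1 x y hx hy)
  · exact cut_count hδ hc2 (by omega) (fun x y hx hy => hbdry C2 x y hx hy)
end SWAux

/-- If `G` is a finite connected simple graph on `n` vertices with minimum degree at
least `⌊n/2⌋ + 1`, then `scw(G) = sn(G) = n - α(G)`. -/
theorem screewidth_eq_scrambleNumber_of_min_degree [Finite V] (G : SimpleGraph V)
    (hG : G.Connected)
    (hδ : ∀ v : V, Nat.card V / 2 + 1 ≤ ({w : V | G.Adj v w}).ncard) :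
    screewidth G = scrambleNumber G ∧
      scrambleNumber G = Nat.card V - indepNumber G := by
  classical
  haveI : Nonempty V := hG.nonempty
  open SWAux in
  set n := Nat.card V with hn
  set m := n / 2 with hm
  -- a maximum independent set
  have hIne : {k | ∃ S : Set V, (∀ u ∈ S, ∀ w ∈ S, ¬ G.Adj u w) ∧ S.ncard = k}.Nonempty :=
    ⟨0, ∅, by simp, by simp⟩
  have hIbdd : BddAbove {k | ∃ S : Set V, (∀ u ∈ S, ∀ w ∈ S, ¬ G.Adj u w) ∧ S.ncard = k} := by
    refine ⟨n, ?_⟩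
    rintro k ⟨S, -, rfl⟩
    rw [hn, ← Set.ncard_univ]
    exact Set.ncard_le_ncard (Set.subset_univ _) (Set.toFinite _)
  obtain ⟨A, hAind, hAcard⟩ := Nat.sSup_mem hIne hIbdd
  obtain ⟨v0⟩ := ‹Nonempty V›
  obtain ⟨u0, w0, hadj0⟩ : ∃ u w, G.Adj u w := by
    have h := hδ v0
    have hne : ({w | G.Adj v0 w}).Nonempty := Set.nonempty_of_ncard_ne_zero (by omega)
    obtain ⟨w0, hw0⟩ := hne
    exact ⟨v0, w0, hw0⟩
  have hα1 : 1 ≤ indepNumber G := by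
    apply le_csSup hIbdd
    refine ⟨{u0}, ?_, Set.ncard_singleton _⟩
    intro u hu w hw
    rw [Set.mem_singleton_iff] at hu hw
    rw [hu, hw]
    exact G.loopless.irrefl u0
  have hαA : A.ncard = indepNumber G := hAcard
  have hαlt : indepNumber G < n := by
    rcases lt_or_ge (indepNumber G) n with h | h
    · exact h
    · exfalso
      have hA_univ : A = Set.univ := by
        apply Set.eq_of_subset_of_ncard_le (Set.subset_univ A) _ (Set.toFinite _)
        rw [Set.ncard_univ, hαA]
        exact h
      exact hAind u0 (by rw [hA_univ]; trivial) w0 (by rw [hA_univ]; trivial) hadj0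
  have hA_compl_sum : A.ncard + Aᶜ.ncard = n := by
    rw [hn]; exact Set.ncard_add_ncard_compl A
  have hcompl : Aᶜ.ncard = n - indepNumber G := by omega
  have hnb : ∀ u ∈ A, ({w | G.Adj u w}).ncard ≤ Aᶜ.ncard := by
    intro u hu
    apply Set.ncard_le_ncard _ (Set.toFinite _)
    intro w hw
    exact fun hwA => hAind u hu w hwA hw
  haveI : Fintype ↥A := Fintype.ofFinite _
  have hscw_le : screewidth G ≤ n - indepNumber G := by
    rw [← hcompl]
    apply Nat.sInf_le
    exact ⟨starDecomp G A (Fintype.equivFin ↥A),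
      starDecomp_width (Fintype.equivFin ↥A) hAind (by omega)
        (fun i => hnb _ ((Fintype.equivFin ↥A).symm i).2)⟩
  set S0 := edgeScramble G ⟨u0, w0, hadj0⟩ with hS0def
  have hS0eggs : ∀ E ∈ S0.eggs, ∃ u w, G.Adj u w ∧ E = {u, w} := fun E hE => hE
  have hS0 : n - indepNumber G ≤ S0.order := by
    apply le_csInf
    · refine ⟨(Set.univ : Set V).ncard, Set.mem_union_left _ ⟨Set.univ, ?_, rfl⟩⟩
      rintro E hE
      obtain ⟨u, w, hadj, rfl⟩ := hS0eggs E hE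
      exact ⟨u, Set.mem_univ u, Or.inl rfl⟩
    · rintro k (⟨H, hH, rfl⟩ | ⟨F, hF, rfl⟩)
      · have hind2 : ∀ u ∈ Hᶜ, ∀ w ∈ Hᶜ, ¬ G.Adj u w := by
          intro u hu w hw hadj
          obtain ⟨z, hz⟩ := hH {u, w} ⟨u, w, hadj, rfl⟩
          rcases hz.2 with rfl | hz2
          · exact hu hz.1
          · rw [Set.mem_singleton_iff] at hz2
            subst hz2
            exact hw hz.1
        have hHc : Hᶜ.ncard ≤ indepNumber G := le_csSup hIbdd ⟨Hᶜ, hind2, rfl⟩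
        have h2 : H.ncard + Hᶜ.ncard = n := by rw [hn]; exact Set.ncard_add_ncard_compl H
        omega
      · obtain ⟨hFsub, E1, hE1, E2, hE2, C1, C2, hneC, hs1, hs2⟩ := hF
        obtain ⟨u1, w1, hadj1, rfl⟩ := hS0eggs E1 hE1
        obtain ⟨u2, w2, hadj2, rfl⟩ := hS0eggs E2 hE2
        have hm2 : n ≤ 2 * m + 1 := by
          have := Nat.div_add_mod n 2
          have := Nat.mod_lt n (show 0 < 2 by norm_num)
          omega
        have hcut := eggCut_card hδ hm2 hadj1 hadj2 hneC hs1 hs2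
        omega
  have hsn_bdd : BddAbove {k | ∃ S : Scramble G, S.order = k} := by
    refine ⟨n, ?_⟩
    rintro k ⟨S, rfl⟩
    rw [hn]
    exact order_le_card S
  have hsn_ge : n - indepNumber G ≤ scrambleNumber G :=
    le_trans hS0 (le_csSup hsn_bdd ⟨S0, rfl⟩)
  have hsn_le_scw : scrambleNumber G ≤ screewidth G := by
    have hsne : {k | ∃ S : Scramble G, S.order = k}.Nonempty := ⟨S0.order, S0, rfl⟩
    have hwne : {k | ∃ D : TreeCutDecomp G, D.width = k}.Nonempty :=
      ⟨(starDecomp G A (Fintype.equivFin ↥A)).width, starDecomp G A (Fintype.equivFin ↥A), rfl⟩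
    apply csSup_le hsne
    rintro k ⟨S, rfl⟩
    apply le_csInf hwne
    rintro w ⟨D, rfl⟩
    exact order_le_width S D
  constructor <;> omega
end

section
/- Let n ≥ 4 and let T be the cubic caterpillar tree with n leaves: T has spine vertices v₂, …, v_{n−1} forming a path, each spine vertex has one pendant leaf attached, and the two end spine vertices v₂ and v_{n−1} each have one additional pendant leaf attached (so every non-leaf vertex has degree 3 and T has exactly n leaves). Then for every vertex v of T, the number of unordered pairs {x, y} of distinct leaves of T whose unique path in T contains v is at most ⌈n(n+2)/4⌉ − 1. -/
open SimpleGraph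

/-- The cubic caterpillar tree with `m + 2` leaves (for `m ≥ 2`): the `m` spine
vertices `Sum.inl i` form a path, each spine vertex `Sum.inl i` has a pendant leaf
`Sum.inr (Sum.inl i)` attached, and the two end spine vertices have one additional
pendant leaf each (`Sum.inr (Sum.inr 0)` at spine `0` and `Sum.inr (Sum.inr 1)` at
spine `m - 1`). -/
def cubicCaterpillar (m : ℕ) : SimpleGraph (Fin m ⊕ (Fin m ⊕ Fin 2)) :=
  SimpleGraph.fromRel fun a b =>
    match a, b with
    | Sum.inl i, Sum.inl j => (i : ℕ) + 1 = (j : ℕ)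
    | Sum.inl i, Sum.inr (Sum.inl j) => (i : ℕ) = (j : ℕ)
    | Sum.inl i, Sum.inr (Sum.inr k) =>
        ((k : ℕ) = 0 ∧ (i : ℕ) = 0) ∨ ((k : ℕ) = 1 ∧ (i : ℕ) = m - 1)
    | _, _ => False

namespace CatAux

variable {m : ℕ}

/-- position on spine of a leaf index -/
def cpos (m : ℕ) : Fin (m+2) ⊕ Fin 2 → Fin (m+2)
  | Sum.inl j => j
  | Sum.inr k => if (k : ℕ) = 0 then ⟨0, by omega⟩ else ⟨m+1, by omega⟩

lemma adj_spine {i j : Fin (m+2)} (h : (i : ℕ) + 1 = (j : ℕ)) :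
    (cubicCaterpillar (m+2)).Adj (Sum.inl i) (Sum.inl j) := by
  rw [cubicCaterpillar, SimpleGraph.fromRel_adj]
  refine ⟨fun he => ?_, Or.inl h⟩
  obtain rfl := Sum.inl.inj he
  omega

lemma adj_leaf (u : Fin (m+2) ⊕ Fin 2) :
    (cubicCaterpillar (m+2)).Adj (Sum.inl (cpos m u)) (Sum.inr u) := by
  rw [cubicCaterpillar, SimpleGraph.fromRel_adj]
  refine ⟨by simp, Or.inl ?_⟩
  match u with
  | Sum.inl j => exact rfl
  | Sum.inr k =>
    show ((k : ℕ) = 0 ∧ ((cpos m (Sum.inr k) : ℕ)) = 0) ∨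
      ((k : ℕ) = 1 ∧ ((cpos m (Sum.inr k) : ℕ)) = m + 2 - 1)
    by_cases hk : (k : ℕ) = 0
    · exact Or.inl ⟨hk, by simp [cpos, hk]⟩
    · have hk1 : (k : ℕ) = 1 := by have := k.isLt; omega
      refine Or.inr ⟨hk1, ?_⟩
      simp only [cpos, hk, if_false]
      omega

lemma adj_pendant (i : Fin (m+2)) :
    (cubicCaterpillar (m+2)).Adj (Sum.inl i) (Sum.inr (Sum.inl i)) := by
  rw [cubicCaterpillar, SimpleGraph.fromRel_adj]
  exact ⟨by simp, Or.inl rfl⟩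

lemma spine_walk_up (i : Fin (m+2)) (d : ℕ) (h : (i : ℕ) + d < m + 2) :
    ∃ w : (cubicCaterpillar (m+2)).Walk (Sum.inl i) (Sum.inl ⟨(i : ℕ) + d, h⟩),
      ∀ x ∈ w.support, ∃ k : Fin (m+2), x = Sum.inl k ∧ i ≤ k ∧ (k : ℕ) ≤ (i : ℕ) + d := by
  induction d with
  | zero =>
    refine ⟨Walk.nil, ?_⟩
    intro x hx
    simp only [Walk.support_nil, List.mem_singleton] at hx
    exact ⟨⟨(i : ℕ) + 0, h⟩, hx, by simp [Fin.le_def], by simp⟩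
  | succ d ih =>
    obtain ⟨w, hw⟩ := ih (by omega)
    refine ⟨w.concat (adj_spine (show ((i : ℕ) + d) + 1 = (i : ℕ) + (d+1) by omega)), ?_⟩
    intro x hx
    rw [Walk.support_concat, List.mem_append] at hx
    rcases hx with hx | hx
    · obtain ⟨k, hk1, hk2, hk3⟩ := hw x hx
      exact ⟨k, hk1, hk2, by omega⟩
    · simp only [List.mem_singleton] at hx
      exact ⟨_, hx, by simp [Fin.le_def], by simp⟩

lemma spine_walk (i j : Fin (m+2)) (hij : i ≤ j) :
    ∃ w : (cubicCaterpillar (m+2)).Walk (Sum.inl i) (Sum.inl j),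
      ∀ x ∈ w.support, ∃ k : Fin (m+2), x = Sum.inl k ∧ i ≤ k ∧ k ≤ j := by
  have hij' : (i : ℕ) ≤ (j : ℕ) := hij
  obtain ⟨jv, hjv⟩ := j
  obtain ⟨d, hd⟩ : ∃ d, jv = (i : ℕ) + d := ⟨jv - (i : ℕ), by simp at hij'; omega⟩
  subst hd
  obtain ⟨w, hw⟩ := spine_walk_up i d (by omega)
  exact ⟨w, fun x hx => by
    obtain ⟨k, h1, h2, h3⟩ := hw x hx
    exact ⟨k, h1, h2, by rw [Fin.le_def]; simpa using h3⟩⟩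

lemma leaf_walk (u₁ u₂ : Fin (m+2) ⊕ Fin 2) :
    ∃ w : (cubicCaterpillar (m+2)).Walk (Sum.inr u₁) (Sum.inr u₂),
      ∀ x ∈ w.support, x = Sum.inr u₁ ∨ x = Sum.inr u₂ ∨
        ∃ k : Fin (m+2), x = Sum.inl k ∧
          ((cpos m u₁ ≤ k ∧ k ≤ cpos m u₂) ∨ (cpos m u₂ ≤ k ∧ k ≤ cpos m u₁)) := by
  rcases le_total (cpos m u₁) (cpos m u₂) with h | h
  · obtain ⟨w, hw⟩ := spine_walk (cpos m u₁) (cpos m u₂) h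
    refine ⟨Walk.cons (adj_leaf u₁).symm (w.concat (adj_leaf u₂)), ?_⟩
    intro x hx
    rw [Walk.support_cons, List.mem_cons, Walk.support_concat,
      List.mem_append] at hx
    rcases hx with hx | hx | hx
    · exact Or.inl hx
    · obtain ⟨k, h1, h2, h3⟩ := hw x hx
      exact Or.inr (Or.inr ⟨k, h1, Or.inl ⟨h2, h3⟩⟩)
    · simp only [List.mem_singleton] at hx
      exact Or.inr (Or.inl hx)
  · obtain ⟨w, hw⟩ := spine_walk (cpos m u₂) (cpos m u₁) h
    refine ⟨(Walk.cons (adj_leaf u₂).symm (w.concat (adj_leaf u₁))).reverse, ?_⟩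
    intro x hx
    rw [Walk.support_reverse, List.mem_reverse, Walk.support_cons, List.mem_cons,
      Walk.support_concat, List.mem_append] at hx
    rcases hx with hx | hx | hx
    · exact Or.inr (Or.inl hx)
    · obtain ⟨k, h1, h2, h3⟩ := hw x hx
      exact Or.inr (Or.inr ⟨k, h1, Or.inr ⟨h2, h3⟩⟩)
    · simp only [List.mem_singleton] at hx
      exact Or.inl hx

/-- Core lemma A: if every walk between two leaves passes through the leaf vertex
`Sum.inr u`, then `u` is one of the two. -/
lemma core_leaf {u u₁ u₂ : Fin (m+2) ⊕ Fin 2}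
    (h : ∀ q : (cubicCaterpillar (m+2)).Walk (Sum.inr u₁) (Sum.inr u₂),
      (Sum.inr u : Fin (m+2) ⊕ (Fin (m+2) ⊕ Fin 2)) ∈ q.support) :
    u = u₁ ∨ u = u₂ := by
  obtain ⟨w, hw⟩ := leaf_walk (m := m) u₁ u₂
  rcases hw _ (h w) with h1 | h1 | ⟨k, h1, -⟩
  · exact Or.inl (Sum.inr.inj h1)
  · exact Or.inr (Sum.inr.inj h1)
  · exact absurd h1 (by simp)

/-- Core lemma B: if every walk between two leaves passes through spine vertex
`Sum.inl i`, then `i` lies between the positions. -/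
lemma core_spine {i : Fin (m+2)} {u₁ u₂ : Fin (m+2) ⊕ Fin 2}
    (h : ∀ q : (cubicCaterpillar (m+2)).Walk (Sum.inr u₁) (Sum.inr u₂),
      (Sum.inl i : Fin (m+2) ⊕ (Fin (m+2) ⊕ Fin 2)) ∈ q.support) :
    (cpos m u₁ ≤ i ∧ i ≤ cpos m u₂) ∨ (cpos m u₂ ≤ i ∧ i ≤ cpos m u₁) := by
  obtain ⟨w, hw⟩ := leaf_walk (m := m) u₁ u₂
  rcases hw _ (h w) with h1 | h1 | ⟨k, h1, h2⟩
  · exact absurd h1 (by simp)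
  · exact absurd h1 (by simp)
  · obtain rfl := Sum.inl.inj h1
    exact h2

/-- spine vertices are not leaves -/
lemma inl_not_leaf (i : Fin (m+2)) :
    ({w | (cubicCaterpillar (m+2)).Adj (Sum.inl i) w}).ncard ≠ 1 := by
  have h1 : (Sum.inr (Sum.inl i) : Fin (m+2) ⊕ (Fin (m+2) ⊕ Fin 2)) ∈
      {w | (cubicCaterpillar (m+2)).Adj (Sum.inl i) w} := adj_pendant i
  have h2 : ∃ z ∈ {w | (cubicCaterpillar (m+2)).Adj (Sum.inl i) w},
      z ≠ (Sum.inr (Sum.inl i) : Fin (m+2) ⊕ (Fin (m+2) ⊕ Fin 2)) := by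
    by_cases hi : (i : ℕ) + 1 < m + 2
    · exact ⟨Sum.inl ⟨(i : ℕ) + 1, hi⟩, adj_spine (by simp), by simp⟩
    · refine ⟨Sum.inr (Sum.inr 1), ?_, by simp⟩
      rw [Set.mem_setOf_eq, cubicCaterpillar, SimpleGraph.fromRel_adj]
      refine ⟨by simp, Or.inl (Or.inr ⟨rfl, by have := i.isLt; omega⟩)⟩
  obtain ⟨z, hz, hzne⟩ := h2
  have : 1 < ({w | (cubicCaterpillar (m+2)).Adj (Sum.inl i) w}).ncard :=
    (Set.one_lt_ncard (Set.toFinite _)).mpr ⟨z, hz, _, h1, hzne⟩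
  omega

end CatAux

namespace CatAux2
open CatAux

lemma ncard_prod {α β : Type*} (s : Set α) (t : Set β) :
    (s ×ˢ t).ncard = s.ncard * t.ncard := by
  rw [show (s ×ˢ t).ncard = Nat.card (s ×ˢ t : Set _) from (Nat.card_coe_set_eq _).symm,
    Nat.card_congr (Equiv.Set.prod s t), Nat.card_prod, Nat.card_coe_set_eq,
    Nat.card_coe_set_eq]

lemma ncard_Iic {m : ℕ} (i : Fin (m+2)) : (Set.Iic i).ncard = (i : ℕ) + 1 := by
  rw [← Finset.coe_Iic, Set.ncard_coe_finset, Fin.card_Iic]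

lemma ncard_Ici {m : ℕ} (i : Fin (m+2)) : (Set.Ici i).ncard = (m + 2) - (i : ℕ) := by
  rw [← Finset.coe_Ici, Set.ncard_coe_finset, Fin.card_Ici]

lemma card_leafidx (m : ℕ) : (Set.univ : Set (Fin (m+2) ⊕ Fin 2)).ncard = m + 4 := by
  rw [Set.ncard_univ, Nat.card_sum]
  simp only [Nat.card_eq_fintype_card, Fintype.card_fin]

lemma cpos_eq_zero {m : ℕ} {u : Fin (m+2) ⊕ Fin 2} (h : (cpos m u : ℕ) = 0) :
    u = Sum.inl ⟨0, by omega⟩ ∨ u = Sum.inr 0 := by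
  match u with
  | Sum.inl j => exact Or.inl (by rw [show j = ⟨0, by omega⟩ from Fin.ext h])
  | Sum.inr k =>
    by_cases hk : (k : ℕ) = 0
    · exact Or.inr (by rw [show k = 0 from Fin.ext hk])
    · exfalso
      simp only [cpos, hk, if_false] at h
      omega

lemma cpos_eq_last {m : ℕ} {u : Fin (m+2) ⊕ Fin 2} (h : (cpos m u : ℕ) = m + 1) :
    u = Sum.inl ⟨m+1, by omega⟩ ∨ u = Sum.inr 1 := by
  match u with
  | Sum.inl j => exact Or.inl (by rw [show j = ⟨m+1, by omega⟩ from Fin.ext h])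
  | Sum.inr k =>
    by_cases hk : (k : ℕ) = 0
    · exfalso
      simp only [cpos, hk, if_true] at h
      omega
    · have : k = 1 := Fin.ext (by have := k.isLt; omega)
      exact Or.inr (by rw [this])

lemma mem_low {m : ℕ} {i : Fin (m+2)} (hi : (i : ℕ) ≤ m) {u : Fin (m+2) ⊕ Fin 2}
    (h : cpos m u ≤ i) :
    u ∈ (Sum.inl '' Set.Iic i ∪ {Sum.inr 0} : Set (Fin (m+2) ⊕ Fin 2)) := by
  match u with
  | Sum.inl j => exact Or.inl ⟨j, h, rfl⟩
  | Sum.inr k =>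
    by_cases hk : (k : ℕ) = 0
    · exact Or.inr (by simp [show k = 0 from Fin.ext hk])
    · exfalso
      rw [Fin.le_def] at h
      simp only [cpos, hk, if_false] at h
      omega

lemma mem_high {m : ℕ} {i : Fin (m+2)} (hi : 1 ≤ (i : ℕ)) {u : Fin (m+2) ⊕ Fin 2}
    (h : i ≤ cpos m u) :
    u ∈ (Sum.inl '' Set.Ici i ∪ {Sum.inr 1} : Set (Fin (m+2) ⊕ Fin 2)) := by
  match u with
  | Sum.inl j => exact Or.inl ⟨j, h, rfl⟩
  | Sum.inr k =>
    by_cases hk : (k : ℕ) = 0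
    · exfalso
      rw [Fin.le_def] at h
      simp only [cpos, hk, if_true] at h
      omega
    · have : k = 1 := Fin.ext (by have := k.isLt; omega)
      exact Or.inr (by simp [this])

end CatAux2

namespace CatMain
open CatAux CatAux2

lemma bound_mid (m a : ℕ) (h1 : 1 ≤ a) (h2 : a ≤ m) :
    (a+2) * ((m+3) - a) * 4 ≤ (m+4) * (m+4+2) + 3 := by
  obtain ⟨b, rfl⟩ : ∃ b, m = a + b := ⟨m - a, by omega⟩
  have h3 : (a + b + 3) - a = b + 3 := by omega
  rw [h3]
  have h : ((a:ℤ)+2) * ((b:ℤ)+3) * 4 ≤ ((a:ℤ)+b+4) * ((a:ℤ)+b+4+2) + 3 := by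
    nlinarith [sq_nonneg ((a:ℤ) - b - 1)]
  exact_mod_cast h

def AL (m : ℕ) (i : Fin (m+2)) : Set (Fin (m+2) ⊕ (Fin (m+2) ⊕ Fin 2)) :=
  Sum.inr '' (Sum.inl '' Set.Iic i ∪ {Sum.inr 0})

def BH (m : ℕ) (i : Fin (m+2)) : Set (Fin (m+2) ⊕ (Fin (m+2) ⊕ Fin 2)) :=
  Sum.inr '' (Sum.inl '' Set.Ici i ∪ {Sum.inr 1})


lemma end_case (m : ℕ) (i : Fin (m+2)) (y₀ : Fin (m+2) ⊕ Fin 2) (hy₀ : y₀ ≠ Sum.inl i)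
    (hleaf : ∀ x : Fin (m+2) ⊕ (Fin (m+2) ⊕ Fin 2),
      ({w | (cubicCaterpillar (m+2)).Adj x w}).ncard = 1 → ∃ w, x = Sum.inr w)
    (hend : ∀ u : Fin (m+2) ⊕ Fin 2, cpos m u = i → u = Sum.inl i ∨ u = y₀)
    (hori : ∀ u₁ u₂ : Fin (m+2) ⊕ Fin 2,
      ((cpos m u₁ ≤ i ∧ i ≤ cpos m u₂) ∨ (cpos m u₂ ≤ i ∧ i ≤ cpos m u₁)) →
      cpos m u₁ = i ∨ cpos m u₂ = i) :
    ({p : Sym2 (Fin (m+2) ⊕ (Fin (m+2) ⊕ Fin 2)) |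
        ∃ x y, p = s(x, y) ∧ x ≠ y ∧
          ({w | (cubicCaterpillar (m+2)).Adj x w}).ncard = 1 ∧
          ({w | (cubicCaterpillar (m+2)).Adj y w}).ncard = 1 ∧
          ∀ q : (cubicCaterpillar (m+2)).Walk x y, Sum.inl i ∈ q.support}).ncard ≤
      ((m+4) * (m+4+2) + 3) / 4 - 1 := by
  set x₀ : Fin (m+2) ⊕ (Fin (m+2) ⊕ Fin 2) := Sum.inr (Sum.inl i) with hx₀
  set x₁ : Fin (m+2) ⊕ (Fin (m+2) ⊕ Fin 2) := Sum.inr y₀ with hx₁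
  set I₁ : Set (Sym2 (Fin (m+2) ⊕ (Fin (m+2) ⊕ Fin 2))) :=
    (fun w => s(x₀, Sum.inr w)) '' Set.univ with hI₁
  set I₂ : Set (Sym2 (Fin (m+2) ⊕ (Fin (m+2) ⊕ Fin 2))) :=
    (fun w => s(x₁, Sum.inr w)) '' Set.univ with hI₂
  have hx01 : x₀ ≠ x₁ := by
    simp only [hx₀, hx₁, ne_eq, Sum.inr.injEq]
    exact fun h => hy₀ h.symm
  have hsub : {p : Sym2 (Fin (m+2) ⊕ (Fin (m+2) ⊕ Fin 2)) |
        ∃ x y, p = s(x, y) ∧ x ≠ y ∧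
          ({w | (cubicCaterpillar (m+2)).Adj x w}).ncard = 1 ∧
          ({w | (cubicCaterpillar (m+2)).Adj y w}).ncard = 1 ∧
          ∀ q : (cubicCaterpillar (m+2)).Walk x y, Sum.inl i ∈ q.support} ⊆
      (I₁ ∪ I₂) \ {s(x₀, x₀), s(x₁, x₁)} := by
    rintro p ⟨x, y, rfl, hxy, hx, hy, hq⟩
    obtain ⟨u₁, rfl⟩ := hleaf x hx
    obtain ⟨u₂, rfl⟩ := hleaf y hy
    constructor
    · rcases hori u₁ u₂ (core_spine hq) with hc | hc
      · rcases hend u₁ hc with rfl | rfl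
        · exact Or.inl ⟨u₂, Set.mem_univ _, rfl⟩
        · exact Or.inr ⟨u₂, Set.mem_univ _, rfl⟩
      · rcases hend u₂ hc with rfl | rfl
        · exact Or.inl ⟨u₁, Set.mem_univ _, Sym2.eq_swap⟩
        · exact Or.inr ⟨u₁, Set.mem_univ _, Sym2.eq_swap⟩
    · intro hmem
      simp only [Set.mem_insert_iff, Set.mem_singleton_iff, Sym2.eq_iff] at hmem
      rcases hmem with (⟨e1, e2⟩ | ⟨e1, e2⟩) | (⟨e1, e2⟩ | ⟨e1, e2⟩) <;>
        exact hxy (e1.trans e2.symm)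
  have hd0 : s(x₀, x₀) ∈ I₁ := ⟨Sum.inl i, Set.mem_univ _, rfl⟩
  have hd1 : s(x₁, x₁) ∈ I₂ := ⟨y₀, Set.mem_univ _, rfl⟩
  have hDsub : ({s(x₀, x₀), s(x₁, x₁)} : Set (Sym2 (Fin (m+2) ⊕ (Fin (m+2) ⊕ Fin 2)))) ⊆
      I₁ ∪ I₂ := by
    rintro p hp
    rcases hp with rfl | hp
    · exact Or.inl hd0
    · rw [Set.mem_singleton_iff] at hp
      subst hp
      exact Or.inr hd1
  have hinter : 1 ≤ (I₁ ∩ I₂).ncard := by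
    have hmem : s(x₀, x₁) ∈ I₁ ∩ I₂ :=
      ⟨⟨y₀, Set.mem_univ _, rfl⟩, ⟨Sum.inl i, Set.mem_univ _, Sym2.eq_swap⟩⟩
    exact (Set.ncard_pos (Set.toFinite _)).mpr ⟨_, hmem⟩
  have hU : (I₁ ∪ I₂).ncard + (I₁ ∩ I₂).ncard = I₁.ncard + I₂.ncard :=
    Set.ncard_union_add_ncard_inter _ _ (Set.toFinite _) (Set.toFinite _)
  have h1 : I₁.ncard ≤ m + 4 :=
    le_trans (Set.ncard_image_le (Set.toFinite _)) (le_of_eq (card_leafidx m))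
  have h2 : I₂.ncard ≤ m + 4 :=
    le_trans (Set.ncard_image_le (Set.toFinite _)) (le_of_eq (card_leafidx m))
  have hDcard : ({s(x₀, x₀), s(x₁, x₁)} : Set (Sym2 (Fin (m+2) ⊕ (Fin (m+2) ⊕ Fin 2)))).ncard = 2 :=
    Set.ncard_pair (by
      simp only [ne_eq, Sym2.eq_iff]
      rintro (⟨e1, e2⟩ | ⟨e1, e2⟩) <;> exact hx01 e1)
  have hdiff : ((I₁ ∪ I₂) \ {s(x₀, x₀), s(x₁, x₁)}).ncard = (I₁ ∪ I₂).ncard - 2 := by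
    rw [Set.ncard_diff hDsub (Set.toFinite _), hDcard]
  have hnum : (2*m+6) * 4 ≤ (m+4) * (m+4+2) + 3 := by nlinarith
  calc _ ≤ ((I₁ ∪ I₂) \ {s(x₀, x₀), s(x₁, x₁)}).ncard :=
        Set.ncard_le_ncard hsub (Set.toFinite _)
    _ ≤ ((m+4) * (m+4+2) + 3) / 4 - 1 := by
        rw [hdiff]
        generalize hP : (m+4) * (m+4+2) = P at hnum ⊢
        omega

theorem main (m : ℕ) (v : Fin (m+2) ⊕ (Fin (m+2) ⊕ Fin 2)) :
    ({p : Sym2 (Fin (m+2) ⊕ (Fin (m+2) ⊕ Fin 2)) |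
        ∃ x y, p = s(x, y) ∧ x ≠ y ∧
          ({w | (cubicCaterpillar (m+2)).Adj x w}).ncard = 1 ∧
          ({w | (cubicCaterpillar (m+2)).Adj y w}).ncard = 1 ∧
          ∀ q : (cubicCaterpillar (m+2)).Walk x y, v ∈ q.support}).ncard ≤
      ((m+4) * (m+4+2) + 3) / 4 - 1 := by
  have hleaf : ∀ x : Fin (m+2) ⊕ (Fin (m+2) ⊕ Fin 2),
      ({w | (cubicCaterpillar (m+2)).Adj x w}).ncard = 1 → ∃ w, x = Sum.inr w := by
    intro x hx
    rcases x with i' | w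
    · exact absurd hx (inl_not_leaf i')
    · exact ⟨w, rfl⟩
  rcases v with i | u
  case inr =>
    -- v is a leaf vertex
    have hsub : {p : Sym2 (Fin (m+2) ⊕ (Fin (m+2) ⊕ Fin 2)) |
        ∃ x y, p = s(x, y) ∧ x ≠ y ∧
          ({w | (cubicCaterpillar (m+2)).Adj x w}).ncard = 1 ∧
          ({w | (cubicCaterpillar (m+2)).Adj y w}).ncard = 1 ∧
          ∀ q : (cubicCaterpillar (m+2)).Walk x y, Sum.inr u ∈ q.support} ⊆
        (fun w => s(Sum.inr u, Sum.inr w)) '' Set.univ := by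
      rintro p ⟨x, y, rfl, hxy, hx, hy, hq⟩
      obtain ⟨u₁, rfl⟩ := hleaf x hx
      obtain ⟨u₂, rfl⟩ := hleaf y hy
      rcases core_leaf hq with rfl | rfl
      · exact ⟨u₂, Set.mem_univ _, rfl⟩
      · exact ⟨u₁, Set.mem_univ _, Sym2.eq_swap⟩
    have hnum : (m+5) * 4 ≤ (m+4) * (m+4+2) + 3 := by nlinarith
    calc _ ≤ ((fun w => s(Sum.inr u, Sum.inr w)) '' Set.univ).ncard :=
          Set.ncard_le_ncard hsub (Set.toFinite _)
      _ ≤ (Set.univ : Set (Fin (m+2) ⊕ Fin 2)).ncard := Set.ncard_image_le (Set.toFinite _)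
      _ = m + 4 := card_leafidx m
      _ ≤ ((m+4) * (m+4+2) + 3) / 4 - 1 := by
          generalize hP : (m+4) * (m+4+2) = P at hnum ⊢
          omega
  case inl =>
    by_cases hi0 : (i : ℕ) = 0
    · -- left end of the spine
      refine end_case m i (Sum.inr 0) (by simp) hleaf ?_ ?_
      · intro u hu
        rcases cpos_eq_zero (by rw [hu]; exact hi0) with hu' | hu'
        · exact Or.inl (by rw [hu']; congr 1; exact Fin.ext hi0.symm)
        · exact Or.inr hu'
      · rintro u₁ u₂ (⟨h1, h2⟩ | ⟨h1, h2⟩)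
        · refine Or.inl (Fin.ext ?_)
          rw [Fin.le_def] at h1
          omega
        · refine Or.inr (Fin.ext ?_)
          rw [Fin.le_def] at h1
          omega
    · by_cases hil : (i : ℕ) = m + 1
      · -- right end of the spine
        refine end_case m i (Sum.inr 1) (by simp) hleaf ?_ ?_
        · intro u hu
          rcases cpos_eq_last (by rw [hu]; exact hil) with hu' | hu'
          · exact Or.inl (by rw [hu']; congr 1; exact Fin.ext hil.symm)
          · exact Or.inr hu'
        · rintro u₁ u₂ (⟨h1, h2⟩ | ⟨h1, h2⟩)
          · refine Or.inr (Fin.ext ?_)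
            rw [Fin.le_def] at h2
            have := (cpos m u₂).isLt
            omega
          · refine Or.inl (Fin.ext ?_)
            rw [Fin.le_def] at h2
            have := (cpos m u₁).isLt
            omega
      · -- interior spine vertex
        have hi1 : 1 ≤ (i : ℕ) := by omega
        have him : (i : ℕ) ≤ m := by have := i.isLt; omega
        have hsub : {p : Sym2 (Fin (m+2) ⊕ (Fin (m+2) ⊕ Fin 2)) |
            ∃ x y, p = s(x, y) ∧ x ≠ y ∧
              ({w | (cubicCaterpillar (m+2)).Adj x w}).ncard = 1 ∧
              ({w | (cubicCaterpillar (m+2)).Adj y w}).ncard = 1 ∧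
              ∀ q : (cubicCaterpillar (m+2)).Walk x y, Sum.inl i ∈ q.support} ⊆
            Function.uncurry Sym2.mk '' (AL m i ×ˢ BH m i) \
              {s(Sum.inr (Sum.inl i), Sum.inr (Sum.inl i))} := by
          rintro p ⟨x, y, rfl, hxy, hx, hy, hq⟩
          obtain ⟨u₁, rfl⟩ := hleaf x hx
          obtain ⟨u₂, rfl⟩ := hleaf y hy
          constructor
          · rcases core_spine hq with ⟨h1, h2⟩ | ⟨h1, h2⟩
            · exact ⟨(Sum.inr u₁, Sum.inr u₂),
                ⟨⟨u₁, mem_low him h1, rfl⟩, ⟨u₂, mem_high hi1 h2, rfl⟩⟩, rfl⟩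
            · exact ⟨(Sum.inr u₂, Sum.inr u₁),
                ⟨⟨u₂, mem_low him h1, rfl⟩, ⟨u₁, mem_high hi1 h2, rfl⟩⟩, Sym2.eq_swap⟩
          · intro hmem
            simp only [Set.mem_singleton_iff, Sym2.eq_iff] at hmem
            rcases hmem with ⟨e1, e2⟩ | ⟨e1, e2⟩ <;> exact hxy (e1.trans e2.symm)
        have hdiag : s(Sum.inr (Sum.inl i), Sum.inr (Sum.inl i)) ∈
            Function.uncurry Sym2.mk '' (AL m i ×ˢ BH m i) :=
          ⟨(Sum.inr (Sum.inl i), Sum.inr (Sum.inl i)),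
            ⟨⟨Sum.inl i, Or.inl ⟨i, Set.mem_Iic.mpr le_rfl, rfl⟩, rfl⟩,
             ⟨Sum.inl i, Or.inl ⟨i, Set.mem_Ici.mpr le_rfl, rfl⟩, rfl⟩⟩, rfl⟩
        have hA : (Sum.inl '' Set.Iic i ∪ {Sum.inr 0} : Set (Fin (m+2) ⊕ Fin 2)).ncard ≤
            (i : ℕ) + 2 := by
          calc _ ≤ (Sum.inl '' Set.Iic i).ncard + ({Sum.inr 0} : Set (Fin (m+2) ⊕ Fin 2)).ncard :=
                Set.ncard_union_le _ _
            _ ≤ (i : ℕ) + 2 := by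
                rw [Set.ncard_image_of_injective _ Sum.inl_injective, ncard_Iic,
                  Set.ncard_singleton]
        have hB : (Sum.inl '' Set.Ici i ∪ {Sum.inr 1} : Set (Fin (m+2) ⊕ Fin 2)).ncard ≤
            (m + 3) - (i : ℕ) := by
          calc _ ≤ (Sum.inl '' Set.Ici i).ncard + ({Sum.inr 1} : Set (Fin (m+2) ⊕ Fin 2)).ncard :=
                Set.ncard_union_le _ _
            _ ≤ (m + 3) - (i : ℕ) := by
                rw [Set.ncard_image_of_injective _ Sum.inl_injective, ncard_Ici,
                  Set.ncard_singleton]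
                omega
        have himg : (Function.uncurry Sym2.mk '' (AL m i ×ˢ BH m i)).ncard ≤
            ((i : ℕ) + 2) * ((m + 3) - (i : ℕ)) := by
          calc _ ≤ (AL m i ×ˢ BH m i).ncard :=
                Set.ncard_image_le (Set.toFinite _)
            _ = (Sum.inl '' Set.Iic i ∪ {Sum.inr 0} : Set (Fin (m+2) ⊕ Fin 2)).ncard *
                (Sum.inl '' Set.Ici i ∪ {Sum.inr 1} : Set (Fin (m+2) ⊕ Fin 2)).ncard := by
                rw [ncard_prod, AL, BH, Set.ncard_image_of_injective _ Sum.inr_injective,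
                  Set.ncard_image_of_injective _ Sum.inr_injective]
            _ ≤ _ := Nat.mul_le_mul hA hB
        have hnum := bound_mid m (i : ℕ) hi1 him
        calc _ ≤ (Function.uncurry Sym2.mk '' (AL m i ×ˢ BH m i) \
              {s(Sum.inr (Sum.inl i), Sum.inr (Sum.inl i))}).ncard :=
              Set.ncard_le_ncard hsub (Set.toFinite _)
          _ = (Function.uncurry Sym2.mk '' (AL m i ×ˢ BH m i)).ncard - 1 :=
              Set.ncard_diff_singleton_of_mem hdiag
          _ ≤ ((m+4) * (m+4+2) + 3) / 4 - 1 := by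
              generalize hQ : ((i : ℕ) + 2) * ((m + 3) - (i : ℕ)) = Q at himg hnum
              generalize hP : (m+4) * (m+4+2) = P at hnum ⊢
              omega

end CatMain

/-- In the cubic caterpillar tree with `n ≥ 4` leaves, every vertex `v` has at most
`⌈n(n+2)/4⌉ - 1` unordered pairs of distinct leaves whose unique path passes through `v`
(equivalently, such that every walk between them passes through `v`). -/
theorem cubicCaterpillar_leaf_geodesics_le (n : ℕ) (hn : 4 ≤ n)
    (v : Fin (n - 2) ⊕ (Fin (n - 2) ⊕ Fin 2)) :
    ({p : Sym2 (Fin (n - 2) ⊕ (Fin (n - 2) ⊕ Fin 2)) |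
        ∃ x y, p = s(x, y) ∧ x ≠ y ∧
          ({w | (cubicCaterpillar (n - 2)).Adj x w}).ncard = 1 ∧
          ({w | (cubicCaterpillar (n - 2)).Adj y w}).ncard = 1 ∧
          ∀ q : (cubicCaterpillar (n - 2)).Walk x y, v ∈ q.support}).ncard ≤
      (n * (n + 2) + 3) / 4 - 1 := by
  obtain ⟨m, rfl⟩ : ∃ m, n = m + 4 := ⟨n - 4, by omega⟩
  exact CatMain.main m v
end
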